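/- arXiv:math/0609290 — 7 statements merged into one kernel-verified Lean document; each statement's English description precedes it below -/
import Mathlib

section
/- Let 0 < α < 2 be real, let d be a positive integer with α < d, and let γ > α be real. Then for every nonnegative Schwartz function φ on ℝ^d, the double integral ∫_{ℝ^d} (1+‖x‖^γ)^{-1} ( ∫_{ℝ^d} φ(y) ‖x−y‖^{α−d} dy ) dx is finite. (This expresses Proposition 2.6 of the paper: for α < d and α < γ, the expected total occupation time E ∫₀^∞ ⟨N_s, φ⟩ ds = ∫ Gφ(x) μ(dx) of the particle system is finite, since it equals a constant multiple of this integral.) -/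
open MeasureTheory Real Set Metric Module

lemma finite_lintegral_rpow_norm_closedBall
    {E : Type*} [NormedAddCommGroup E] [NormedSpace ℝ E] [FiniteDimensional ℝ E]
    [MeasurableSpace E] [BorelSpace E] (μ : Measure E) [μ.IsAddHaarMeasure]
    {s : ℝ} (hs0 : s < 0) (hsd : -(finrank ℝ E : ℝ) < s) :
    ∫⁻ x in closedBall (0 : E) 1, ENNReal.ofReal (‖x‖ ^ s) ∂μ < ⊤ := by
  have h_meas : Measurable fun x : E => ‖x‖ ^ s := measurable_norm.pow measurable_const
  have h_pos : ∀ x : E, 0 ≤ ‖x‖ ^ s := fun x => rpow_nonneg (norm_nonneg x) s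
  rw [lintegral_eq_lintegral_meas_le _ (Filter.Eventually.of_forall h_pos) h_meas.aemeasurable]
  set ν := μ.restrict (closedBall (0 : E) 1)
  have hb : ∀ t : ℝ, 0 < t →
      ν {a : E | t ≤ ‖a‖ ^ s} ≤ μ (closedBall (0 : E) (t ^ s⁻¹)) := by
    intro t ht
    refine le_trans (Measure.restrict_apply_le _ _) (measure_mono ?_)
    intro a ha
    simp only [mem_setOf_eq] at ha
    have ha0 : a ≠ 0 := by
      rintro rfl
      rw [norm_zero, zero_rpow hs0.ne] at ha
      exact absurd ha (not_le.2 ht)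
    have hna : 0 < ‖a‖ := norm_pos_iff.2 ha0
    rw [mem_closedBall_zero_iff]
    exact (Real.le_rpow_inv_iff_of_neg hna ht hs0).2 ha
  have hexp : (finrank ℝ E : ℝ) * s⁻¹ < -1 := by
    rw [← div_eq_mul_inv, div_lt_iff_of_neg hs0]
    linarith
  calc ∫⁻ t in Ioi (0:ℝ), ν {a : E | t ≤ ‖a‖ ^ s}
      ≤ ∫⁻ t in Ioc (0:ℝ) 1 ∪ Ioi 1, ν {a : E | t ≤ ‖a‖ ^ s} :=
        lintegral_mono_set Ioi_subset_Ioc_union_Ioi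
    _ ≤ (∫⁻ t in Ioc (0:ℝ) 1, ν {a : E | t ≤ ‖a‖ ^ s})
        + ∫⁻ t in Ioi (1:ℝ), ν {a : E | t ≤ ‖a‖ ^ s} := lintegral_union_le _ _ _
    _ < ⊤ := ENNReal.add_lt_top.2 ⟨?_, ?_⟩
  · calc ∫⁻ t in Ioc (0:ℝ) 1, ν {a : E | t ≤ ‖a‖ ^ s}
        ≤ ∫⁻ _ in Ioc (0:ℝ) 1, μ (closedBall (0:E) 1) :=
          setLIntegral_mono' measurableSet_Ioc (fun t _ =>
            le_trans (measure_mono (subset_univ _)) (le_of_eq (Measure.restrict_apply_univ _)))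
      _ = μ (closedBall (0:E) 1) * volume (Ioc (0:ℝ) 1) := setLIntegral_const _ _
      _ < ⊤ := ENNReal.mul_lt_top measure_closedBall_lt_top (by simp)
  · have hmono : ∀ t ∈ Ioi (1:ℝ), ν {a : E | t ≤ ‖a‖ ^ s}
        ≤ ENNReal.ofReal (t ^ ((finrank ℝ E : ℝ) * s⁻¹)) * μ (closedBall (0:E) 1) := by
      intro t ht
      have ht0 : (0:ℝ) < t := lt_trans one_pos ht
      refine (hb t ht0).trans ?_
      rw [Measure.addHaar_closedBall μ 0 (rpow_nonneg ht0.le _), ← Real.rpow_natCast (t ^ s⁻¹),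
        ← Real.rpow_mul ht0.le, mul_comm s⁻¹]
      exact mul_le_mul_right (measure_mono ball_subset_closedBall) _
    calc ∫⁻ t in Ioi (1:ℝ), ν {a : E | t ≤ ‖a‖ ^ s}
        ≤ ∫⁻ t in Ioi (1:ℝ),
            ENNReal.ofReal (t ^ ((finrank ℝ E : ℝ) * s⁻¹)) * μ (closedBall (0:E) 1) :=
          setLIntegral_mono' measurableSet_Ioi hmono
      _ = (∫⁻ t in Ioi (1:ℝ), ENNReal.ofReal (t ^ ((finrank ℝ E : ℝ) * s⁻¹)))
          * μ (closedBall (0:E) 1) := lintegral_mul_const' _ _ measure_closedBall_lt_top.ne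
      _ < ⊤ := ENNReal.mul_lt_top
          (integrableOn_Ioi_rpow_of_lt hexp one_pos).setLIntegral_lt_top measure_closedBall_lt_top

lemma rlem_geom {β b a c : ℝ} (hβ : 0 < β) (hb : 0 ≤ b) (ha : 1 ≤ a) (hc : 0 < c)
    (hca : c ≤ a * (1 + b)) :
    a ^ (-β) ≤ (1 + b) ^ β * min 1 (c ^ (-β)) := by
  have h1b : (0:ℝ) < 1 + b := by linarith
  have ha0 : (0:ℝ) < a := lt_of_lt_of_le one_pos ha
  rw [mul_min_of_nonneg _ _ (rpow_nonneg h1b.le β)]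
  refine le_min ?_ ?_
  · rw [mul_one]
    refine (rpow_le_one_of_one_le_of_nonpos ha (neg_nonpos.2 hβ.le)).trans ?_
    calc (1:ℝ) = 1 ^ β := (one_rpow β).symm
      _ ≤ (1 + b) ^ β := rpow_le_rpow zero_le_one (by linarith) hβ.le
  · have h2 : c ^ β ≤ (1 + b) ^ β * a ^ β := by
      rw [← mul_rpow h1b.le ha0.le]
      exact rpow_le_rpow hc.le (by linarith) hβ.le
    have ha' : (0:ℝ) < a ^ β := rpow_pos_of_pos ha0 β
    have hc' : (0:ℝ) < c ^ β := rpow_pos_of_pos hc β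
    rw [rpow_neg ha0.le, rpow_neg hc.le, inv_eq_one_div, inv_eq_one_div, mul_one_div,
      div_le_div_iff₀ ha' hc', one_mul]
    linarith

lemma rlem_weight {γ β t : ℝ} (hγ : 0 < γ) (hβ : 0 < β) (ht : 0 ≤ t) :
    (1 + t ^ γ)⁻¹ * min 1 (t ^ (-β)) ≤ 2 ^ (γ + β) * (1 + t) ^ (-(γ + β)) := by
  have htγ : 0 ≤ t ^ γ := rpow_nonneg ht γ
  have hmin : 0 ≤ min 1 (t ^ (-β)) := le_min zero_le_one (rpow_nonneg ht _)
  rcases le_total t 1 with h1 | h1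
  · have hL : (1 + t ^ γ)⁻¹ * min 1 (t ^ (-β)) ≤ 1 :=
      mul_le_one₀ (inv_le_one_of_one_le₀ (by linarith)) hmin (min_le_left _ _)
    refine hL.trans ?_
    have h2 : (2:ℝ) ^ (-(γ + β)) ≤ (1 + t) ^ (-(γ + β)) :=
      rpow_le_rpow_of_nonpos (by linarith) (by linarith) (by linarith)
    calc (1:ℝ) = 2 ^ (γ + β) * 2 ^ (-(γ + β)) := by rw [← rpow_add two_pos, add_neg_cancel, rpow_zero]
      _ ≤ 2 ^ (γ + β) * (1 + t) ^ (-(γ + β)) :=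
        mul_le_mul_of_nonneg_left h2 (rpow_nonneg zero_le_two _)
  · have ht0 : (0:ℝ) < t := lt_of_lt_of_le one_pos h1
    have hL : (1 + t ^ γ)⁻¹ * min 1 (t ^ (-β)) ≤ t ^ (-γ) * t ^ (-β) := by
      refine mul_le_mul ?_ (min_le_right _ _) hmin (rpow_nonneg ht0.le _)
      rw [rpow_neg ht0.le]
      exact inv_anti₀ (rpow_pos_of_pos ht0 γ) (by linarith)
    refine hL.trans ?_
    rw [← rpow_add ht0, ← neg_add]
    have h2 : (2 * t) ^ (-(γ + β)) ≤ (1 + t) ^ (-(γ + β)) :=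
      rpow_le_rpow_of_nonpos (by linarith) (by linarith) (by linarith)
    calc t ^ (-(γ + β)) = 2 ^ (γ + β) * (2 * t) ^ (-(γ + β)) := by
          rw [mul_rpow zero_le_two ht0.le, ← mul_assoc, ← rpow_add two_pos, add_neg_cancel,
            rpow_zero, one_mul]
      _ ≤ 2 ^ (γ + β) * (1 + t) ^ (-(γ + β)) :=
        mul_le_mul_of_nonneg_left h2 (rpow_nonneg zero_le_two _)

lemma rlem_poly {β t : ℝ} (d : ℕ) (hβ0 : 0 ≤ β) (hβd : β ≤ d) (ht : 0 ≤ t) :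
    (1 + t) ^ β ≤ 2 ^ d * (1 + t ^ d) := by
  have h1 : (1 + t) ^ β ≤ (1 + t) ^ (d : ℝ) := rpow_le_rpow_of_exponent_le (by linarith) hβd
  rw [rpow_natCast] at h1
  refine h1.trans ?_
  have htd : 0 ≤ t ^ d := pow_nonneg ht d
  rcases le_total t 1 with h | h
  · calc (1 + t) ^ d ≤ (2:ℝ) ^ d := pow_le_pow_left₀ (by linarith) (by linarith) d
      _ ≤ 2 ^ d * (1 + t ^ d) := le_mul_of_one_le_right (by positivity) (by linarith)
  · calc (1 + t) ^ d ≤ (2 * t) ^ d := pow_le_pow_left₀ (by linarith) (by linarith) d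
      _ = 2 ^ d * t ^ d := mul_pow 2 t d
      _ ≤ 2 ^ d * (1 + t ^ d) := mul_le_mul_of_nonneg_left (by linarith) (by positivity)

lemma occupation_time_aux {E : Type*} [NormedAddCommGroup E] [NormedSpace ℝ E]
    [FiniteDimensional ℝ E] [MeasurableSpace E] [BorelSpace E] (μ : Measure E)
    [μ.IsAddHaarMeasure] (α γ : ℝ) (hα0 : 0 < α) (hαd : α < finrank ℝ E) (hγ : α < γ)
    (φ : E → ℝ) (hφc : Continuous φ) (hφ : ∀ y, 0 ≤ φ y)
    (hφint : Integrable (fun y => ‖φ y‖ + ‖y‖ ^ (finrank ℝ E) * ‖φ y‖) μ) :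
    ∫⁻ x, (ENNReal.ofReal (1 + ‖x‖ ^ γ))⁻¹ *
      ∫⁻ y, ENNReal.ofReal (φ y * ‖x - y‖ ^ (α - finrank ℝ E)) ∂μ ∂μ < ⊤ := by
  have hγ0 : 0 < γ := hα0.trans hγ
  set n := finrank ℝ E with hn
  have hn0 : 0 < n := by
    have : (0:ℝ) < (n:ℝ) := hα0.trans hαd
    exact_mod_cast this
  haveI : Nontrivial E := Module.nontrivial_of_finrank_pos hn0
  set β : ℝ := (n : ℝ) - α with hβdef
  have hβ : 0 < β := by simp only [hβdef]; linarith
  have hβn : β ≤ (n : ℝ) := by simp only [hβdef]; linarith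
  have hαn : α - (n : ℝ) = -β := by ring
  -- abbreviations
  set W : E → ENNReal := fun x => (ENNReal.ofReal (1 + ‖x‖ ^ γ))⁻¹ with hWdef
  set K : E → ENNReal := fun z => ENNReal.ofReal (‖z‖ ^ (-β)) with hKdef
  have hWm : Measurable W :=
    ((measurable_const.add (measurable_norm.pow measurable_const)).ennreal_ofReal).inv
  have hKm : Measurable K := (measurable_norm.pow measurable_const).ennreal_ofReal
  have hφm : Measurable φ := hφc.measurable
  -- the three finite constants
  set C0 : ENNReal := ∫⁻ z in closedBall (0 : E) 1, ENNReal.ofReal (‖z‖ ^ (-β)) ∂μ with hC0def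
  have hC0 : C0 < ⊤ :=
    finite_lintegral_rpow_norm_closedBall μ (by linarith) (by push_cast; linarith)
  set K2 : ENNReal := ∫⁻ x, W x * ENNReal.ofReal (min 1 (‖x‖ ^ (-β))) ∂μ with hK2def
  have hK2 : K2 < ⊤ := by
    have hpt : ∀ x : E, W x * ENNReal.ofReal (min 1 (‖x‖ ^ (-β)))
        ≤ ENNReal.ofReal (2 ^ (γ + β)) * ENNReal.ofReal ((1 + ‖x‖) ^ (-(γ + β))) := by
      intro x
      have h1 : (0:ℝ) < 1 + ‖x‖ ^ γ := by positivity
      rw [hWdef]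
      simp only
      rw [← ENNReal.ofReal_inv_of_pos h1, ← ENNReal.ofReal_mul (inv_nonneg.2 h1.le),
        ← ENNReal.ofReal_mul (by positivity)]
      exact ENNReal.ofReal_le_ofReal (rlem_weight hγ0 hβ (norm_nonneg x))
    calc K2 ≤ ∫⁻ x, ENNReal.ofReal (2 ^ (γ + β)) * ENNReal.ofReal ((1 + ‖x‖) ^ (-(γ + β))) ∂μ :=
          lintegral_mono hpt
      _ = ENNReal.ofReal (2 ^ (γ + β)) * ∫⁻ x, ENNReal.ofReal ((1 + ‖x‖) ^ (-(γ + β))) ∂μ :=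
          lintegral_const_mul' _ _ ENNReal.ofReal_ne_top
      _ < ⊤ := ENNReal.mul_lt_top ENNReal.ofReal_lt_top
          (finite_integral_one_add_norm (by push_cast; linarith))
  set M : ENNReal := K2 + C0 with hMdef
  have hM : M < ⊤ := ENNReal.add_lt_top.2 ⟨hK2, hC0⟩
  -- the key bound on the inner integral (after swapping)
  have hJ : ∀ y : E, ∫⁻ x, W x * K (x - y) ∂μ ≤ ENNReal.ofReal ((1 + ‖y‖) ^ β) * M := by
    intro y
    have h1y : (1:ℝ) ≤ (1 + ‖y‖) ^ β := by
      calc (1:ℝ) = 1 ^ β := (one_rpow β).symm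
        _ ≤ (1 + ‖y‖) ^ β := rpow_le_rpow zero_le_one (by linarith [norm_nonneg y]) hβ.le
    have h0 : ∀ᵐ x : E ∂μ, x ≠ 0 := by
      rw [ae_iff]
      simpa using measure_singleton (0 : E)
    have hpt : ∀ᵐ x ∂μ, W x * K (x - y) ≤ ENNReal.ofReal ((1 + ‖y‖) ^ β) *
        (W x * ENNReal.ofReal (min 1 (‖x‖ ^ (-β))) +
          (closedBall y 1).indicator (fun x => ENNReal.ofReal (‖x - y‖ ^ (-β))) x) := by
      filter_upwards [h0] with x hx0
      by_cases hxy : x ∈ closedBall y 1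
      · have hW1 : W x ≤ 1 := by
          rw [hWdef]
          simp only
          exact ENNReal.inv_le_one.2 (ENNReal.one_le_ofReal.2
            (by linarith [rpow_nonneg (norm_nonneg x) γ]))
        calc W x * K (x - y) ≤ 1 * K (x - y) := mul_le_mul_left hW1 _
          _ = K (x - y) := one_mul _
          _ ≤ ENNReal.ofReal ((1 + ‖y‖) ^ β) *
              (closedBall y 1).indicator (fun x => ENNReal.ofReal (‖x - y‖ ^ (-β))) x := by
            rw [indicator_of_mem hxy]
            exact le_mul_of_one_le_left (zero_le) (ENNReal.one_le_ofReal.2 h1y)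
          _ ≤ _ := mul_le_mul_right le_add_self _
      · rw [mem_closedBall_iff_norm, not_le] at hxy
        have hxa : ‖x‖ ≤ ‖x - y‖ * (1 + ‖y‖) := by
          have h1 : ‖x‖ ≤ ‖x - y‖ + ‖y‖ := by
            calc ‖x‖ = ‖x - y + y‖ := by rw [sub_add_cancel]
              _ ≤ ‖x - y‖ + ‖y‖ := norm_add_le _ _
          nlinarith [norm_nonneg y, hxy]
        have hgeo : ‖x - y‖ ^ (-β) ≤ (1 + ‖y‖) ^ β * min 1 (‖x‖ ^ (-β)) :=
          rlem_geom hβ (norm_nonneg y) hxy.le (norm_pos_iff.2 hx0) hxa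
        calc W x * K (x - y)
            ≤ W x * (ENNReal.ofReal ((1 + ‖y‖) ^ β) * ENNReal.ofReal (min 1 (‖x‖ ^ (-β)))) := by
              refine mul_le_mul_right ?_ _
              rw [hKdef]
              simp only
              rw [← ENNReal.ofReal_mul (rpow_nonneg (by positivity) β)]
              exact ENNReal.ofReal_le_ofReal hgeo
          _ = ENNReal.ofReal ((1 + ‖y‖) ^ β) * (W x * ENNReal.ofReal (min 1 (‖x‖ ^ (-β)))) := by
              ring
          _ ≤ _ := mul_le_mul_right le_self_add _
    have htrans : ∫⁻ x, (closedBall y 1).indicator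
        (fun x => ENNReal.ofReal (‖x - y‖ ^ (-β))) x ∂μ = C0 := by
      have heq : ∀ x : E, (closedBall y 1).indicator
          (fun x => ENNReal.ofReal (‖x - y‖ ^ (-β))) x
          = (closedBall (0 : E) 1).indicator (fun z => ENNReal.ofReal (‖z‖ ^ (-β))) (x - y) := by
        intro x
        by_cases h : x ∈ closedBall y 1
        · rw [indicator_of_mem h, indicator_of_mem
            (by rwa [mem_closedBall_zero_iff, ← mem_closedBall_iff_norm])]
        · rw [indicator_of_notMem h, indicator_of_notMem
            (by rwa [mem_closedBall_zero_iff, ← mem_closedBall_iff_norm])]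
      simp_rw [heq]
      rw [lintegral_sub_right_eq_self
        (fun z => (closedBall (0 : E) 1).indicator (fun z => ENNReal.ofReal (‖z‖ ^ (-β))) z) y]
      rw [lintegral_indicator measurableSet_closedBall]
    calc ∫⁻ x, W x * K (x - y) ∂μ
        ≤ ∫⁻ x, ENNReal.ofReal ((1 + ‖y‖) ^ β) *
            (W x * ENNReal.ofReal (min 1 (‖x‖ ^ (-β))) +
              (closedBall y 1).indicator (fun x => ENNReal.ofReal (‖x - y‖ ^ (-β))) x) ∂μ :=
          lintegral_mono_ae hpt
      _ = ENNReal.ofReal ((1 + ‖y‖) ^ β) *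
            ∫⁻ x, (W x * ENNReal.ofReal (min 1 (‖x‖ ^ (-β))) +
              (closedBall y 1).indicator (fun x => ENNReal.ofReal (‖x - y‖ ^ (-β))) x) ∂μ :=
          lintegral_const_mul' _ _ ENNReal.ofReal_ne_top
      _ = ENNReal.ofReal ((1 + ‖y‖) ^ β) * M := by
          rw [lintegral_add_left (f := fun x => W x * ENNReal.ofReal (min 1 (‖x‖ ^ (-β)))) (hWm.mul (measurable_const.min (measurable_norm.pow measurable_const)).ennreal_ofReal)]
          rw [htrans]
  -- final integrability of the Schwartz-type factor
  have hfin : ∫⁻ y, ENNReal.ofReal (φ y * (1 + ‖y‖) ^ β) ∂μ < ⊤ := by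
    have hle : ∀ y : E, φ y * (1 + ‖y‖) ^ β ≤ 2 ^ n * (‖φ y‖ + ‖y‖ ^ n * ‖φ y‖) := by
      intro y
      have h1 : (1 + ‖y‖) ^ β ≤ 2 ^ n * (1 + ‖y‖ ^ n) := rlem_poly n hβ.le hβn (norm_nonneg y)
      calc φ y * (1 + ‖y‖) ^ β ≤ ‖φ y‖ * (2 ^ n * (1 + ‖y‖ ^ n)) :=
            mul_le_mul (le_abs_self _) h1 (rpow_nonneg (by positivity) β) (norm_nonneg _)
        _ = 2 ^ n * (‖φ y‖ + ‖y‖ ^ n * ‖φ y‖) := by ring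
    calc ∫⁻ y, ENNReal.ofReal (φ y * (1 + ‖y‖) ^ β) ∂μ
        ≤ ∫⁻ y, ENNReal.ofReal (2 ^ n * (‖φ y‖ + ‖y‖ ^ n * ‖φ y‖)) ∂μ :=
          lintegral_mono fun y => ENNReal.ofReal_le_ofReal (hle y)
      _ < ⊤ := (hφint.const_mul _).lintegral_lt_top
  -- assemble everything
  have hFm : Measurable (Function.uncurry fun x y : E =>
      ENNReal.ofReal (φ y) * (W x * K (x - y))) :=
    ((hφm.comp measurable_snd).ennreal_ofReal).mul
      ((hWm.comp measurable_fst).mul (hKm.comp (measurable_fst.sub measurable_snd)))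
  calc ∫⁻ x, W x * ∫⁻ y, ENNReal.ofReal (φ y * ‖x - y‖ ^ (α - (n : ℝ))) ∂μ ∂μ
      = ∫⁻ x, ∫⁻ y, ENNReal.ofReal (φ y) * (W x * K (x - y)) ∂μ ∂μ := by
        refine lintegral_congr fun x => ?_
        rw [← lintegral_const_mul' (W x) _ (ENNReal.inv_ne_top.2
          (ENNReal.ofReal_pos.2 (by positivity)).ne')]
        refine lintegral_congr fun y => ?_
        rw [hαn, ENNReal.ofReal_mul (hφ y)]
        ring
    _ = ∫⁻ y, ∫⁻ x, ENNReal.ofReal (φ y) * (W x * K (x - y)) ∂μ ∂μ :=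
        lintegral_lintegral_swap hFm.aemeasurable
    _ = ∫⁻ y, ENNReal.ofReal (φ y) * ∫⁻ x, W x * K (x - y) ∂μ ∂μ :=
        lintegral_congr fun y => lintegral_const_mul' _ _ ENNReal.ofReal_ne_top
    _ ≤ ∫⁻ y, ENNReal.ofReal (φ y) * (ENNReal.ofReal ((1 + ‖y‖) ^ β) * M) ∂μ :=
        lintegral_mono fun y => mul_le_mul_right (hJ y) _
    _ = (∫⁻ y, ENNReal.ofReal (φ y * (1 + ‖y‖) ^ β) ∂μ) * M := by
        rw [← lintegral_mul_const' M _ hM.ne]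
        refine lintegral_congr fun y => ?_
        rw [ENNReal.ofReal_mul (hφ y), mul_assoc]
    _ < ⊤ := ENNReal.mul_lt_top hfin hM

/-- Proposition 2.6: for `α < d` and `α < γ`, the expected total occupation time
`∫ Gφ(x) μ(dx)` is finite, i.e. the double integral
`∫ (1+‖x‖^γ)⁻¹ (∫ φ(y) ‖x−y‖^{α−d}) dy) dx < ∞`. -/
theorem occupation_time_finite (α γ : ℝ) (d : ℕ) (hd : 0 < d)
    (hα0 : 0 < α) (hα2 : α < 2) (hαd : α < d) (hγ : α < γ)
    (φ : SchwartzMap (EuclideanSpace ℝ (Fin d)) ℝ) (hφ : ∀ y, 0 ≤ φ y) :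
    ∫⁻ x : EuclideanSpace ℝ (Fin d),
      (ENNReal.ofReal (1 + ‖x‖ ^ γ))⁻¹ *
        ∫⁻ y : EuclideanSpace ℝ (Fin d),
          ENNReal.ofReal (φ y * ‖x - y‖ ^ (α - d)) < ⊤ := by
  have hd' : α < (finrank ℝ (EuclideanSpace ℝ (Fin d)) : ℝ) := by
    rw [finrank_euclideanSpace_fin]; exact hαd
  have hint : Integrable (fun y : EuclideanSpace ℝ (Fin d) =>
      ‖φ y‖ + ‖y‖ ^ (finrank ℝ (EuclideanSpace ℝ (Fin d))) * ‖φ y‖) volume :=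
    (φ.integrable.norm).add (φ.integrable_pow_mul volume _)
  have h := occupation_time_aux (volume : Measure (EuclideanSpace ℝ (Fin d))) α γ hα0 hd' hγ
    φ φ.continuous hφ hint
  simpa [finrank_euclideanSpace_fin] using h
end

section
/- Let 0 < γ < 1 and 1 < α ≤ 2 be real numbers, and for s, t ≥ 0 define R(s,t) = ∫₀^{min(s,t)} u^{−γ/α} ( (t−u)^{1−1/α} + (s−u)^{1−1/α} ) du. Then for all fixed 0 ≤ r < v and 0 ≤ s < t there exist constants C > 0 and T₀ ≥ 1 such that for all T ≥ T₀, | R(s+T, r) − R(s+T, v) − R(t+T, r) + R(t+T, v) | ≤ C T^{−1/α}. -/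
open MeasureTheory Real
open Set

private lemma rpow_integrableOn {p : ℝ} (hp : -1 < p) (a b : ℝ) :
    IntegrableOn (fun u : ℝ => u ^ p) (Ioc a b) :=
  (intervalIntegral.intervalIntegrable_rpow' hp).1

private lemma mul_integrableOn {p e : ℝ} (hp : -1 < p) (he : 0 ≤ e)
    (a b x : ℝ) (hbx : b ≤ x) :
    IntegrableOn (fun u : ℝ => u ^ p * (x - u) ^ e) (Ioc a b) := by
  have hmeas : AEStronglyMeasurable (fun u : ℝ => (x - u) ^ e)
      (volume.restrict (Ioc a b)) :=
    (((continuous_const.sub continuous_id).rpow_const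
      (fun _ => Or.inr he)).measurable).aestronglyMeasurable
  have hint := rpow_integrableOn hp a b
  have h := hint.bdd_mul (c := (x - a) ^ e) hmeas ?_
  · exact h.congr (Filter.Eventually.of_forall fun u => mul_comm _ _)
  · filter_upwards [ae_restrict_mem measurableSet_Ioc] with u hu
    have h1 : 0 ≤ x - u := by linarith [hu.2]
    have h2 : x - u ≤ x - a := by linarith [hu.1]
    rw [Real.norm_eq_abs, abs_of_nonneg (rpow_nonneg h1 _)]
    exact rpow_le_rpow h1 h2 he

private lemma rpow_sub_rpow_le {e x y : ℝ} (he0 : 0 < e) (he1 : e ≤ 1)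
    (hy : 0 < y) (hxy : y ≤ x) : x ^ e - y ^ e ≤ y ^ (e - 1) * (x - y) := by
  have hz1 : 1 ≤ x / y := (one_le_div hy).2 hxy
  have hb : (x / y) ^ e ≤ 1 + e * (x / y - 1) := by
    have h := Real.geom_mean_le_arith_mean2_weighted (w₁ := e) (w₂ := 1 - e)
      (p₁ := x / y) (p₂ := 1) he0.le (by linarith) (by linarith) zero_le_one (by ring)
    rw [Real.one_rpow, mul_one] at h
    linarith
  have hx : x ^ e = y ^ e * (x / y) ^ e := by
    rw [← Real.mul_rpow hy.le (by positivity)]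
    rw [mul_div_cancel₀ _ hy.ne']
  have hye : (0:ℝ) ≤ y ^ e := rpow_nonneg hy.le _
  have key : x ^ e ≤ y ^ e + y ^ e * (x / y - 1) := by
    have h2 : y ^ e * (x / y) ^ e ≤ y ^ e * (1 + e * (x / y - 1)) :=
      mul_le_mul_of_nonneg_left hb hye
    have h3 : e * (x / y - 1) ≤ x / y - 1 := by nlinarith
    nlinarith [hx]
  have hfin : y ^ e * (x / y - 1) = y ^ (e - 1) * (x - y) := by
    rw [Real.rpow_sub_one hy.ne']
    field_simp
  linarith [key, hfin.le, hfin.ge]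


/-- Remark 2.2(c): long-range dependence of the limit process `ξ` of Theorem 2.1.
For fixed `0 ≤ r < v` and `0 ≤ s < t`, the increment covariance
`E(ξ_{s+T} − ξ_{t+T})(ξ_r − ξ_v) = R(s+T,r) − R(s+T,v) − R(t+T,r) + R(t+T,v)`
is `O(T^{−1/α})` as `T → ∞`. -/
theorem long_range_dependence (γ α : ℝ) (hγ0 : 0 < γ) (hγ1 : γ < 1)
    (hα1 : 1 < α) (hα2 : α ≤ 2)
    (R : ℝ → ℝ → ℝ)
    (hR : ∀ s t : ℝ, R s t =
      ∫ u in Set.Ioc (0 : ℝ) (min s t),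
        u ^ (-γ / α) * ((t - u) ^ (1 - 1 / α) + (s - u) ^ (1 - 1 / α)))
    (r v s t : ℝ) (hr : 0 ≤ r) (hrv : r < v) (hs : 0 ≤ s) (hst : s < t) :
    ∃ C > 0, ∃ T₀ ≥ (1 : ℝ), ∀ T ≥ T₀,
      |R (s + T) r - R (s + T) v - R (t + T) r + R (t + T) v| ≤ C * T ^ (-1 / α) := by
  have hα0 : (0:ℝ) < α := by linarith
  have hαinv0 : 0 < 1/α := by positivity
  have hαinv1 : 1/α < 1 := (div_lt_one hα0).2 hα1
  have hp : (-1:ℝ) < -γ / α := by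
    rw [neg_div, neg_lt_neg_iff, div_lt_one hα0]; linarith
  have he0 : (0:ℝ) < 1 - 1/α := by linarith
  have he1 : (1:ℝ) - 1/α ≤ 1 := by linarith
  have hv : 0 < v := lt_of_le_of_lt hr hrv
  have hK0 : 0 ≤ ∫ u in Ioc (0:ℝ) v, u ^ (-γ/α) :=
    setIntegral_nonneg measurableSet_Ioc fun u hu => rpow_nonneg hu.1.le _
  refine ⟨((∫ u in Ioc (0:ℝ) v, u ^ (-γ/α)) + 1) * ((t - s) * 2 ^ (1/α)), ?_,
    2*v + 2, by linarith, ?_⟩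
  · have h2 : (0:ℝ) < 2 ^ (1/α) := rpow_pos_of_pos two_pos _
    exact mul_pos (by linarith) (mul_pos (by linarith) h2)
  intro T hT
  have hT0 : (0:ℝ) < T := by linarith
  have hrsT : r ≤ s + T := by linarith
  have hvsT : v ≤ s + T := by linarith
  have hrtT : r ≤ t + T := by linarith
  have hvtT : v ≤ t + T := by linarith
  rw [hR, hR, hR, hR, min_eq_right hrsT, min_eq_right hvsT, min_eq_right hrtT,
    min_eq_right hvtT]
  have hsplit : ∀ m a : ℝ, 0 ≤ m → m ≤ a →
      (∫ u in Ioc (0:ℝ) m,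
        u ^ (-γ/α) * ((m - u) ^ (1 - 1/α) + (a - u) ^ (1 - 1/α)))
      = (∫ u in Ioc (0:ℝ) m, u ^ (-γ/α) * (m - u) ^ (1 - 1/α))
        + (∫ u in Ioc (0:ℝ) m, u ^ (-γ/α) * (a - u) ^ (1 - 1/α)) := by
    intro m a hm hma
    rw [← integral_add (mul_integrableOn hp he0.le 0 m m le_rfl)
      (mul_integrableOn hp he0.le 0 m a hma)]
    congr 1
    ext u
    ring
  rw [hsplit r (s+T) hr hrsT, hsplit v (s+T) hv.le hvsT,
    hsplit r (t+T) hr hrtT, hsplit v (t+T) hv.le hvtT]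
  have hdiff : ∀ a : ℝ, v ≤ a →
      (∫ u in Ioc (0:ℝ) v, u ^ (-γ/α) * (a - u) ^ (1 - 1/α))
      - (∫ u in Ioc (0:ℝ) r, u ^ (-γ/α) * (a - u) ^ (1 - 1/α))
      = ∫ u in Ioc r v, u ^ (-γ/α) * (a - u) ^ (1 - 1/α) := by
    intro a hva
    have hu := setIntegral_union (Set.Ioc_disjoint_Ioc_of_le le_rfl) measurableSet_Ioc
      (mul_integrableOn hp he0.le 0 r a (by linarith))
      (mul_integrableOn hp he0.le r v a hva)
      (f := fun u : ℝ => u ^ (-γ/α) * (a - u) ^ (1 - 1/α)) (μ := volume)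
    rw [Ioc_union_Ioc_eq_Ioc hr hrv.le] at hu
    rw [hu]; ring
  have hIt := mul_integrableOn hp he0.le r v (t+T) hvtT
  have hIs := mul_integrableOn hp he0.le r v (s+T) hvsT
  have hX : (∫ u in Ioc (0:ℝ) r, u ^ (-γ/α) * (r - u) ^ (1 - 1/α))
        + (∫ u in Ioc (0:ℝ) r, u ^ (-γ/α) * (s + T - u) ^ (1 - 1/α))
      - ((∫ u in Ioc (0:ℝ) v, u ^ (-γ/α) * (v - u) ^ (1 - 1/α))
        + (∫ u in Ioc (0:ℝ) v, u ^ (-γ/α) * (s + T - u) ^ (1 - 1/α)))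
      - ((∫ u in Ioc (0:ℝ) r, u ^ (-γ/α) * (r - u) ^ (1 - 1/α))
        + (∫ u in Ioc (0:ℝ) r, u ^ (-γ/α) * (t + T - u) ^ (1 - 1/α)))
      + ((∫ u in Ioc (0:ℝ) v, u ^ (-γ/α) * (v - u) ^ (1 - 1/α))
        + (∫ u in Ioc (0:ℝ) v, u ^ (-γ/α) * (t + T - u) ^ (1 - 1/α)))
      = ∫ u in Ioc r v,
          (u ^ (-γ/α) * (t + T - u) ^ (1 - 1/α)
            - u ^ (-γ/α) * (s + T - u) ^ (1 - 1/α)) := by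
    rw [integral_sub hIt hIs]
    linarith [hdiff (s+T) hvsT, hdiff (t+T) hvtT]
  rw [hX]
  have hDnonneg : 0 ≤ ∫ u in Ioc r v,
      (u ^ (-γ/α) * (t + T - u) ^ (1 - 1/α)
        - u ^ (-γ/α) * (s + T - u) ^ (1 - 1/α)) := by
    refine setIntegral_nonneg measurableSet_Ioc fun u hu => ?_
    have hu0 : 0 < u := lt_of_le_of_lt hr hu.1
    have hy0 : (0:ℝ) ≤ s + T - u := by linarith [hu.2]
    refine sub_nonneg.2 (mul_le_mul_of_nonneg_left ?_ (rpow_nonneg hu0.le _))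
    exact rpow_le_rpow hy0 (by linarith) he0.le
  rw [abs_of_nonneg hDnonneg]
  have h2exp : (2:ℝ) ^ (-1/α : ℝ) = ((2:ℝ) ^ (1/α : ℝ))⁻¹ := by
    rw [neg_div, Real.rpow_neg (by norm_num)]
  have hhalf : (T/2) ^ (-1/α : ℝ) = 2 ^ (1/α : ℝ) * T ^ (-1/α : ℝ) := by
    rw [Real.div_rpow hT0.le (by norm_num), h2exp, div_eq_mul_inv, inv_inv]
    ring
  have hpoint : ∀ u ∈ Ioc r v,
      u ^ (-γ/α) * (t + T - u) ^ (1 - 1/α)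
        - u ^ (-γ/α) * (s + T - u) ^ (1 - 1/α)
      ≤ u ^ (-γ/α) * ((t - s) * (2 ^ (1/α : ℝ) * T ^ (-1/α : ℝ))) := by
    intro u hu
    have hu0 : 0 < u := lt_of_le_of_lt hr hu.1
    have huv : u ≤ v := hu.2
    have hy0 : (0:ℝ) < s + T - u := by linarith
    have hxy : s + T - u ≤ t + T - u := by linarith
    have hkey := rpow_sub_rpow_le he0 he1 hy0 hxy
    rw [show t + T - u - (s + T - u) = t - s by ring] at hkey
    have hTy : T/2 ≤ s + T - u := by linarith
    have hmono : (s + T - u) ^ ((1 - 1/α) - 1) ≤ (T/2) ^ ((1 - 1/α) - 1) :=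
      rpow_le_rpow_of_nonpos (by linarith) hTy (by linarith)
    rw [show (1 - 1/α) - 1 = -1/α by ring] at hkey hmono
    have hbound : (t + T - u) ^ (1 - 1/α) - (s + T - u) ^ (1 - 1/α)
        ≤ (t - s) * (2 ^ (1/α : ℝ) * T ^ (-1/α : ℝ)) := by
      calc (t + T - u) ^ (1 - 1/α) - (s + T - u) ^ (1 - 1/α)
          ≤ (s + T - u) ^ (-1/α : ℝ) * (t - s) := hkey
        _ ≤ (T/2) ^ (-1/α : ℝ) * (t - s) :=
            mul_le_mul_of_nonneg_right hmono (by linarith)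
        _ = (t - s) * (2 ^ (1/α : ℝ) * T ^ (-1/α : ℝ)) := by rw [hhalf]; ring
    calc u ^ (-γ/α) * (t + T - u) ^ (1 - 1/α)
          - u ^ (-γ/α) * (s + T - u) ^ (1 - 1/α)
        = u ^ (-γ/α) * ((t + T - u) ^ (1 - 1/α) - (s + T - u) ^ (1 - 1/α)) := by ring
      _ ≤ u ^ (-γ/α) * ((t - s) * (2 ^ (1/α : ℝ) * T ^ (-1/α : ℝ))) :=
          mul_le_mul_of_nonneg_left hbound (rpow_nonneg hu0.le _)
  have hIg : IntegrableOn
      (fun u : ℝ => u ^ (-γ/α) * ((t - s) * (2 ^ (1/α : ℝ) * T ^ (-1/α : ℝ))))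
      (Ioc r v) := (rpow_integrableOn hp r v).mul_const _
  have hmono1 := setIntegral_mono_on (hIt.sub hIs) hIg measurableSet_Ioc hpoint
  simp only [Pi.sub_apply] at hmono1
  have hg : (∫ u in Ioc r v,
        u ^ (-γ/α) * ((t - s) * (2 ^ (1/α : ℝ) * T ^ (-1/α : ℝ))))
      = (∫ u in Ioc r v, u ^ (-γ/α)) * ((t - s) * (2 ^ (1/α : ℝ) * T ^ (-1/α : ℝ))) :=
    integral_mul_const _ _
  have hKmono : (∫ u in Ioc r v, u ^ (-γ/α)) ≤ ∫ u in Ioc (0:ℝ) v, u ^ (-γ/α) := by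
    refine setIntegral_mono_set (rpow_integrableOn hp 0 v) ?_
      ((Ioc_subset_Ioc_left hr).eventuallyLE)
    filter_upwards [ae_restrict_mem measurableSet_Ioc] with u hu
    exact rpow_nonneg hu.1.le _
  have hM : (0:ℝ) ≤ (t - s) * (2 ^ (1/α : ℝ) * T ^ (-1/α : ℝ)) := by
    have h1 := rpow_pos_of_pos hT0 (-1/α : ℝ)
    have h2 := rpow_pos_of_pos (two_pos (α := ℝ)) (1/α : ℝ)
    exact mul_nonneg (by linarith) (mul_nonneg h2.le h1.le)
  calc (∫ u in Ioc r v,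
        (u ^ (-γ/α) * (t + T - u) ^ (1 - 1/α)
          - u ^ (-γ/α) * (s + T - u) ^ (1 - 1/α)))
      ≤ ∫ u in Ioc r v,
          u ^ (-γ/α) * ((t - s) * (2 ^ (1/α : ℝ) * T ^ (-1/α : ℝ))) := hmono1
    _ = (∫ u in Ioc r v, u ^ (-γ/α)) * ((t - s) * (2 ^ (1/α : ℝ) * T ^ (-1/α : ℝ))) := hg
    _ ≤ ((∫ u in Ioc (0:ℝ) v, u ^ (-γ/α)) + 1)
        * ((t - s) * (2 ^ (1/α : ℝ) * T ^ (-1/α : ℝ))) := by nlinarith [hKmono]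
    _ = ((∫ u in Ioc (0:ℝ) v, u ^ (-γ/α)) + 1) * ((t - s) * 2 ^ (1/α : ℝ))
        * T ^ (-1/α : ℝ) := by ring
end

section
/- Let φ be a nonnegative Schwartz function on ℝ, and let p_u(x) = u/(π(u² + x²)) for u > 0. Then for every x ∈ ℝ, lim_{T→∞} (1/log T) ∫₀^T ( ∫_ℝ p_u(x−y) φ(y) dy ) du = (1/π) ∫_ℝ φ(y) dy. -/
open MeasureTheory Real Filter


-- L1
lemma cauchy_integral_u {a : ℝ} (ha : a ≠ 0) {T : ℝ} (hT : 0 < T) :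
    ∫ u in Set.Ioc (0:ℝ) T, u / (π * (u ^ 2 + a ^ 2))
      = (Real.log (T ^ 2 + a ^ 2) - Real.log (a ^ 2)) / (2 * π) := by
  rw [← intervalIntegral.integral_of_le hT.le]
  have key : ∀ u ∈ Set.uIcc (0:ℝ) T, HasDerivAt (fun u => Real.log (u ^ 2 + a ^ 2) / (2 * π))
      (u / (π * (u ^ 2 + a ^ 2))) u := by
    intro u _
    have h1 : (0:ℝ) < u ^ 2 + a ^ 2 := by positivity
    have h2 : HasDerivAt (fun u : ℝ => u ^ 2 + a ^ 2) (2 * u) u := by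
      simpa using (hasDerivAt_pow 2 u).add_const (a ^ 2)
    have h4 := ((h2.log h1.ne').div_const (2 * π))
    refine h4.congr_deriv ?_
    have hpi := pi_ne_zero
    field_simp
  have hcont : IntervalIntegrable (fun u => u / (π * (u ^ 2 + a ^ 2))) volume 0 T := by
    apply ContinuousOn.intervalIntegrable
    apply ContinuousOn.div continuousOn_id (by fun_prop)
    intro u _
    positivity
  rw [intervalIntegral.integral_eq_sub_of_hasDerivAt key hcont]
  rw [div_sub_div_same]
  norm_num

-- L2
lemma cauchy_total_mass {u : ℝ} (hu : 0 < u) (x : ℝ) :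
    ∫ y : ℝ, u / (π * (u ^ 2 + (x - y) ^ 2)) = 1 := by
  rw [integral_sub_left_eq_self (fun t => u / (π * (u ^ 2 + t ^ 2))) volume x]
  have h : ∀ t : ℝ, u / (π * (u ^ 2 + t ^ 2)) = (π * u)⁻¹ * (1 + (t / u) ^ 2)⁻¹ := by
    intro t
    have hu' := hu.ne'
    have hpi := pi_ne_zero
    field_simp
  simp_rw [h]
  rw [integral_const_mul, MeasureTheory.Measure.integral_comp_div (fun t => (1 + t ^ 2)⁻¹) u,
    integral_univ_inv_one_add_sq, smul_eq_mul, abs_of_pos hu]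
  have hpi := pi_ne_zero
  field_simp

-- integrability of the kernel in y
lemma cauchy_kernel_integrable {u : ℝ} (hu : 0 < u) (x : ℝ) :
    Integrable (fun y : ℝ => u / (π * (u ^ 2 + (x - y) ^ 2))) := by
  rw [integrable_comp_sub_left (fun t : ℝ => u / (π * (u ^ 2 + t ^ 2))) x]
  have h : ∀ t : ℝ, u / (π * (u ^ 2 + t ^ 2)) = (π * u)⁻¹ * (1 + (t / u) ^ 2)⁻¹ := by
    intro t
    have hu' := hu.ne'
    have hpi := pi_ne_zero
    field_simp
  simp_rw [h]
  exact (integrable_inv_one_add_sq.comp_div hu.ne').const_mul _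

lemma inner_integrable (φ : SchwartzMap ℝ ℝ) {u : ℝ} (hu : 0 < u) (x : ℝ) :
    Integrable (fun y : ℝ => u / (π * (u ^ 2 + (x - y) ^ 2)) * φ y) := by
  have hb : Integrable (fun y : ℝ => u / (π * u ^ 2) * ‖φ y‖) :=
    (φ.integrable (μ := volume)).norm.const_mul _
  refine hb.mono' ?_ ?_
  · apply Continuous.aestronglyMeasurable
    apply Continuous.mul ?_ φ.continuous
    apply Continuous.div continuous_const (by fun_prop)
    intro y
    positivity
  · refine Eventually.of_forall fun y => ?_
    have h1 : (0:ℝ) < π * (u ^ 2 + (x - y) ^ 2) := by positivity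
    rw [norm_mul]
    gcongr
    rw [Real.norm_of_nonneg (le_of_lt (div_pos hu h1))]
    apply div_le_div_of_nonneg_left hu.le (by positivity)
    nlinarith [sq_nonneg (x - y), pi_pos]

lemma g_le (φ : SchwartzMap ℝ ℝ) (hφ : ∀ y, 0 ≤ φ y) {B : ℝ} (hB : ∀ y, φ y ≤ B)
    {u : ℝ} (hu : 0 < u) (x : ℝ) :
    ∫ y : ℝ, u / (π * (u ^ 2 + (x - y) ^ 2)) * φ y ≤ B := by
  have h1 : ∫ y : ℝ, u / (π * (u ^ 2 + (x - y) ^ 2)) * φ y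
      ≤ ∫ y : ℝ, u / (π * (u ^ 2 + (x - y) ^ 2)) * B := by
    refine integral_mono (inner_integrable φ hu x) ((cauchy_kernel_integrable hu x).mul_const B) ?_
    intro y
    have h1 : (0:ℝ) < π * (u ^ 2 + (x - y) ^ 2) := by positivity
    exact mul_le_mul_of_nonneg_left (hB y) (le_of_lt (div_pos hu h1))
  calc _ ≤ _ := h1
    _ = B := by rw [integral_mul_const, cauchy_total_mass hu x, one_mul]

lemma swap_eq (φ : SchwartzMap ℝ ℝ) (hφ : ∀ y, 0 ≤ φ y) {B : ℝ} (hB : ∀ y, φ y ≤ B)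
    {T : ℝ} (hT : 0 < T) (x : ℝ) :
    ∫ u in Set.Ioc (0:ℝ) T, ∫ y : ℝ, u / (π * (u ^ 2 + (x - y) ^ 2)) * φ y
      = ∫ y : ℝ, φ y *
          ((Real.log (T ^ 2 + (x - y) ^ 2) - Real.log ((x - y) ^ 2)) / (2 * π)) := by
  have hmeas : AEStronglyMeasurable
      (Function.uncurry fun u y : ℝ => u / (π * (u ^ 2 + (x - y) ^ 2)) * φ y)
      ((volume.restrict (Set.Ioc (0:ℝ) T)).prod volume) := by
    have m1 : Measurable fun q : ℝ × ℝ => q.1 / (π * (q.1 ^ 2 + (x - q.2) ^ 2)) :=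
      measurable_fst.div (by fun_prop)
    exact (m1.mul (φ.continuous.measurable.comp measurable_snd)).aestronglyMeasurable
  have hint : Integrable
      (Function.uncurry fun u y : ℝ => u / (π * (u ^ 2 + (x - y) ^ 2)) * φ y)
      ((volume.restrict (Set.Ioc (0:ℝ) T)).prod volume) := by
    rw [integrable_prod_iff hmeas]
    constructor
    · filter_upwards [ae_restrict_mem measurableSet_Ioc] with u hu
      exact inner_integrable φ hu.1 x
    · refine Integrable.mono' (g := fun _ => B)
        ((integrableOn_const_iff (C := B)).2 (Or.inr measure_Ioc_lt_top))
        hmeas.norm.integral_prod_right' ?_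
      filter_upwards [ae_restrict_mem measurableSet_Ioc] with u hu
      simp only [Function.uncurry_apply_pair]
      have h0 : ∀ y : ℝ, ‖u / (π * (u ^ 2 + (x - y) ^ 2)) * φ y‖
          = u / (π * (u ^ 2 + (x - y) ^ 2)) * φ y := fun y =>
        Real.norm_of_nonneg (mul_nonneg (div_nonneg hu.1.le (by positivity)) (hφ y))
      have h2 : ∫ y : ℝ, ‖u / (π * (u ^ 2 + (x - y) ^ 2)) * φ y‖
          = ∫ y : ℝ, u / (π * (u ^ 2 + (x - y) ^ 2)) * φ y := by simp_rw [h0]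
      rw [h2, Real.norm_of_nonneg (integral_nonneg fun y =>
        mul_nonneg (div_nonneg hu.1.le (by positivity)) (hφ y))]
      exact g_le φ hφ hB hu.1 x
  calc ∫ u in Set.Ioc (0:ℝ) T, ∫ y : ℝ, u / (π * (u ^ 2 + (x - y) ^ 2)) * φ y
      = ∫ y : ℝ, ∫ u in Set.Ioc (0:ℝ) T, u / (π * (u ^ 2 + (x - y) ^ 2)) * φ y :=
        integral_integral_swap hint
    _ = _ := by
        refine integral_congr_ae ?_
        have hx : ∀ᵐ (y : ℝ), y ≠ x := by
          refine ae_iff.mpr ?_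
          simp [Real.volume_singleton]
        filter_upwards [hx] with y hy
        have ha : x - y ≠ 0 := sub_ne_zero.2 (Ne.symm hy)
        rw [integral_mul_const, cauchy_integral_u ha hT, mul_comm]

lemma abs_log_le {t : ℝ} (ht : 0 ≤ t) :
    |Real.log t| ≤ t + 2 * t ^ (-(2:ℝ)⁻¹) := by
  rcases eq_or_lt_of_le ht with h0 | h0
  · rw [← h0]
    rw [Real.log_zero, Real.zero_rpow (by norm_num)]
    norm_num
  rcases le_or_gt 1 t with h1 | h1
  · have hl : 0 ≤ Real.log t := Real.log_nonneg h1
    rw [abs_of_nonneg hl]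
    have := Real.log_le_sub_one_of_pos h0
    have : (0:ℝ) ≤ t ^ (-(2:ℝ)⁻¹) := Real.rpow_nonneg ht _
    linarith [Real.log_le_sub_one_of_pos h0]
  · have hl : Real.log t < 0 := Real.log_neg h0 h1
    rw [abs_of_neg hl]
    have hr : Real.log (t ^ (-(2:ℝ)⁻¹)) = -(2:ℝ)⁻¹ * Real.log t := Real.log_rpow h0 _
    have hrp : (0:ℝ) < t ^ (-(2:ℝ)⁻¹) := Real.rpow_pos_of_pos h0 _
    have h2 := Real.log_le_sub_one_of_pos hrp
    nlinarith

lemma ratio_nonneg {T a : ℝ} (hT : 3 ≤ T) :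
    0 ≤ (Real.log (T ^ 2 + a ^ 2) - Real.log (a ^ 2)) / (2 * π * Real.log T) := by
  have hlogT : 0 < Real.log T := Real.log_pos (by linarith)
  apply div_nonneg _ (by positivity)
  rcases eq_or_ne a 0 with rfl | ha
  · simp only [ne_eq, OfNat.ofNat_ne_zero, not_false_eq_true, zero_pow, add_zero, Real.log_zero,
      sub_zero]
    apply Real.log_nonneg
    nlinarith
  · have : Real.log (a ^ 2) ≤ Real.log (T ^ 2 + a ^ 2) :=
      Real.log_le_log (by positivity) (by nlinarith)
    linarith

lemma ratio_le {T a : ℝ} (hT : 3 ≤ T) :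
    (Real.log (T ^ 2 + a ^ 2) - Real.log (a ^ 2)) / (2 * π * Real.log T)
      ≤ (2 + (a ^ 2 + 2 * |a| + 4 * |a| ^ (-(2:ℝ)⁻¹))) / (2 * π) := by
  have hT0 : (0:ℝ) < T := by linarith
  have hlogT : 1 ≤ Real.log T := by
    rw [← Real.log_exp 1]
    exact Real.log_le_log (Real.exp_pos 1)
      (le_trans (Real.exp_one_lt_d9.le.trans (by norm_num)) hT)
  set C : ℝ := a ^ 2 + 2 * |a| + 4 * |a| ^ (-(2:ℝ)⁻¹) with hC_def
  have hC : 0 ≤ C := by positivity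
  have hN : Real.log (T ^ 2 + a ^ 2) - Real.log (a ^ 2) ≤ 2 * Real.log T + C := by
    have e1 : Real.log (T ^ 2 + a ^ 2) ≤ 2 * Real.log T + Real.log (1 + a ^ 2) := by
      have hle : T ^ 2 + a ^ 2 ≤ T ^ 2 * (1 + a ^ 2) := by
        nlinarith [mul_nonneg (sub_nonneg.2 (show (1:ℝ) ≤ T ^ 2 by nlinarith)) (sq_nonneg a)]
      calc Real.log (T ^ 2 + a ^ 2) ≤ Real.log (T ^ 2 * (1 + a ^ 2)) :=
            Real.log_le_log (by positivity) hle
        _ = Real.log (T ^ 2) + Real.log (1 + a ^ 2) :=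
            Real.log_mul (by positivity) (by positivity)
        _ = 2 * Real.log T + Real.log (1 + a ^ 2) := by
            rw [Real.log_pow]; push_cast; ring
    have e2 : Real.log (1 + a ^ 2) ≤ a ^ 2 := by
      have := Real.log_le_sub_one_of_pos (show (0:ℝ) < 1 + a ^ 2 by positivity)
      linarith
    have e3 : -Real.log (a ^ 2) ≤ 2 * |a| + 4 * |a| ^ (-(2:ℝ)⁻¹) := by
      have hsq : Real.log (a ^ 2) = 2 * Real.log |a| := by
        rw [← sq_abs, Real.log_pow]; push_cast; ring
      have h4 := abs_log_le (abs_nonneg a)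
      have h5 : -Real.log (|a|) ≤ |Real.log (|a|)| := neg_le_abs _
      rw [hsq]
      linarith
    simp only [hC_def]
    linarith
  rw [div_le_div_iff₀ (by positivity) (by positivity)]
  nlinarith [pi_pos, mul_nonneg hC (sub_nonneg.2 hlogT),
    mul_le_mul_of_nonneg_right hN Real.pi_pos.le]

lemma W_integrable :
    Integrable ((Set.Ioo (-1:ℝ) 1).indicator fun t => |t| ^ (-(2:ℝ)⁻¹)) := by
  have hV : Integrable ((Set.Ioo (0:ℝ) 1).indicator fun t => t ^ (-(2:ℝ)⁻¹)) := by
    have h : IntegrableOn (fun t : ℝ => t ^ (-(2:ℝ)⁻¹)) (Set.Ioo 0 1) :=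
      (intervalIntegral.integrableOn_Ioo_rpow_iff one_pos).2 (by norm_num)
    exact h.integrable_indicator measurableSet_Ioo
  have hVneg : Integrable fun t : ℝ =>
      (Set.Ioo (0:ℝ) 1).indicator (fun s => s ^ (-(2:ℝ)⁻¹)) (-t) := hV.comp_neg
  refine (hV.add hVneg).mono' ?_ ?_
  · exact ((measurable_id.abs.pow_const _).indicator measurableSet_Ioo).aestronglyMeasurable
  · refine Eventually.of_forall fun t => ?_
    have hnn : ∀ s : ℝ, 0 ≤ (Set.Ioo (0:ℝ) 1).indicator (fun s => s ^ (-(2:ℝ)⁻¹)) s :=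
      fun s => Set.indicator_nonneg (fun u hu => Real.rpow_nonneg hu.1.le _) s
    have hWnn : 0 ≤ (Set.Ioo (-1:ℝ) 1).indicator (fun t => |t| ^ (-(2:ℝ)⁻¹)) t :=
      Set.indicator_nonneg (fun u _ => Real.rpow_nonneg (abs_nonneg u) _) t
    rw [Real.norm_of_nonneg hWnn]
    simp only [Pi.add_apply]
    by_cases hmem : t ∈ Set.Ioo (-1:ℝ) 1
    · rw [Set.indicator_of_mem hmem]
      rcases lt_trichotomy t 0 with hlt | heq | hgt
      · have hmem' : -t ∈ Set.Ioo (0:ℝ) 1 := ⟨by linarith, by linarith [hmem.1]⟩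
        rw [Set.indicator_of_mem hmem', abs_of_neg hlt]
        simpa using hnn t
      · subst heq
        rw [abs_zero, Real.zero_rpow (by norm_num)]
        exact add_nonneg (hnn 0) (hnn (-0))
      · have hmem' : t ∈ Set.Ioo (0:ℝ) 1 := ⟨hgt, hmem.2⟩
        rw [Set.indicator_of_mem hmem', abs_of_pos hgt]
        simpa using hnn (-t)
    · rw [Set.indicator_of_notMem hmem]
      exact add_nonneg (hnn t) (hnn (-t))

lemma G_integrable (φ : SchwartzMap ℝ ℝ) (x : ℝ) {B : ℝ} (hB : ∀ y, ‖φ y‖ ≤ B) :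
    Integrable (fun y : ℝ => ‖φ y‖ *
      ((2 + ((x - y) ^ 2 + 2 * |x - y| + 4 * |x - y| ^ (-(2:ℝ)⁻¹))) / (2 * π))) := by
  have hBnn : 0 ≤ B := le_trans (norm_nonneg _) (hB 0)
  have h2 : Integrable fun y : ℝ => ‖φ y‖ * (x - y) ^ 2 := by
    refine Integrable.mono' (g := fun y => 2 * x ^ 2 * ‖φ y‖ + 2 * (‖y‖ ^ 2 * ‖φ y‖))
      (((φ.integrable (μ := volume)).norm.const_mul (2 * x ^ 2)).add
        ((φ.integrable_pow_mul volume 2).const_mul 2))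
      (φ.continuous.norm.mul (by continuity)).aestronglyMeasurable ?_
    refine Eventually.of_forall fun y => ?_
    rw [Real.norm_of_nonneg (by positivity)]
    have hn : ‖y‖ ^ 2 = y ^ 2 := by rw [Real.norm_eq_abs, sq_abs]
    rw [hn]
    nlinarith [mul_nonneg (norm_nonneg (φ y)) (sq_nonneg (x + y)), norm_nonneg (φ y)]
  have h1 : Integrable fun y : ℝ => ‖φ y‖ * |x - y| := by
    refine Integrable.mono' (g := fun y => |x| * ‖φ y‖ + ‖y‖ ^ 1 * ‖φ y‖)
      (((φ.integrable (μ := volume)).norm.const_mul |x|).add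
        (φ.integrable_pow_mul volume 1))
      (φ.continuous.norm.mul (by continuity)).aestronglyMeasurable ?_
    refine Eventually.of_forall fun y => ?_
    rw [Real.norm_of_nonneg (by positivity), pow_one]
    simp only [Real.norm_eq_abs]
    have htri : |x - y| ≤ |x| + |y| := abs_sub x y
    nlinarith [abs_nonneg (φ y), abs_nonneg y, abs_nonneg x,
      mul_le_mul_of_nonneg_left htri (abs_nonneg (φ y))]
  have hr : Integrable fun y : ℝ => ‖φ y‖ * |x - y| ^ (-(2:ℝ)⁻¹) := by
    set W : ℝ → ℝ := (Set.Ioo (-1:ℝ) 1).indicator fun t => |t| ^ (-(2:ℝ)⁻¹) with hW_def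
    have hWnn : ∀ t, 0 ≤ W t :=
      fun t => Set.indicator_nonneg (fun u _ => Real.rpow_nonneg (abs_nonneg u) _) t
    refine Integrable.mono' (g := fun y => ‖φ y‖ + B * W (x - y))
      ((φ.integrable (μ := volume)).norm.add
        (((integrable_comp_sub_left W x).2 W_integrable).const_mul B))
      ((φ.continuous.norm.measurable.mul
        ((measurable_const.sub measurable_id).abs.pow_const _)).aestronglyMeasurable) ?_
    refine Eventually.of_forall fun y => ?_
    rw [Real.norm_of_nonneg (mul_nonneg (norm_nonneg _) (Real.rpow_nonneg (abs_nonneg _) _))]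
    rcases le_or_gt 1 |x - y| with hge | hlt
    · have : |x - y| ^ (-(2:ℝ)⁻¹) ≤ 1 :=
        Real.rpow_le_one_of_one_le_of_nonpos hge (by norm_num)
      have h0 : 0 ≤ B * W (x - y) := mul_nonneg hBnn (hWnn _)
      nlinarith [norm_nonneg (φ y)]
    · have hmem : x - y ∈ Set.Ioo (-1:ℝ) 1 := by
        constructor <;> [linarith [abs_lt.1 hlt]; linarith [abs_lt.1 hlt]]
      have hWeq : W (x - y) = |x - y| ^ (-(2:ℝ)⁻¹) := Set.indicator_of_mem hmem _
      rw [hWeq]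
      have := mul_le_mul_of_nonneg_right (hB y) (Real.rpow_nonneg (abs_nonneg (x - y)) (-(2:ℝ)⁻¹))
      linarith [norm_nonneg (φ y)]
  have hsum := (((φ.integrable (μ := volume)).norm.const_mul 2).add
      (h2.add ((h1.const_mul 2).add (hr.const_mul 4)))).const_mul (2 * π)⁻¹
  refine hsum.congr (Eventually.of_forall fun y => ?_)
  simp only [Pi.add_apply]
  ring

lemma ratio_tendsto {a : ℝ} (ha : a ≠ 0) :
    Tendsto (fun T : ℝ => (Real.log (T ^ 2 + a ^ 2) - Real.log (a ^ 2)) / (2 * π * Real.log T))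
      atTop (nhds π⁻¹) := by
  have hnum : Tendsto (fun T : ℝ => Real.log (1 + a ^ 2 / T ^ 2) - Real.log (a ^ 2)) atTop
      (nhds (0 - Real.log (a ^ 2))) := by
    apply Tendsto.sub_const
    have h1 : Tendsto (fun T : ℝ => a ^ 2 / T ^ 2) atTop (nhds 0) :=
      Tendsto.div_atTop tendsto_const_nhds (tendsto_pow_atTop two_ne_zero)
    have h2 := (Real.continuousAt_log (by norm_num : (1:ℝ) + 0 ≠ 0)).tendsto.comp
      (tendsto_const_nhds.add h1 :
        Tendsto (fun T : ℝ => 1 + a ^ 2 / T ^ 2) atTop (nhds (1 + 0)))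
    simpa [Function.comp_def] using h2
  have hden : Tendsto (fun T : ℝ => 2 * π * Real.log T) atTop atTop :=
    Real.tendsto_log_atTop.const_mul_atTop (by positivity)
  have hsmall := Tendsto.div_atTop hnum hden
  have heq : (fun T : ℝ => π⁻¹ + (Real.log (1 + a ^ 2 / T ^ 2) - Real.log (a ^ 2)) /
        (2 * π * Real.log T)) =ᶠ[atTop]
      fun T : ℝ => (Real.log (T ^ 2 + a ^ 2) - Real.log (a ^ 2)) / (2 * π * Real.log T) := by
    filter_upwards [eventually_ge_atTop (3:ℝ)] with T hT
    have hT0 : (0:ℝ) < T := by linarith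
    have hlog : 0 < Real.log T := Real.log_pos (by linarith)
    have hsplit : Real.log (T ^ 2 + a ^ 2)
        = 2 * Real.log T + Real.log (1 + a ^ 2 / T ^ 2) := by
      have hTT : T ^ 2 + a ^ 2 = T ^ 2 * (1 + a ^ 2 / T ^ 2) := by field_simp
      rw [hTT, Real.log_mul (by positivity) (by positivity), Real.log_pow]
      push_cast; ring
    have hl0 : Real.log T ≠ 0 := ne_of_gt hlog
    have hp0 : π ≠ 0 := pi_ne_zero
    rw [hsplit]
    field_simp
    ring
  refine Tendsto.congr' heq ?_
  have := tendsto_const_nhds (α := ℝ) (x := π⁻¹) (f := atTop).add hsmall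
  simpa using (tendsto_const_nhds (x := π⁻¹)).add hsmall

/-- Property (3.42) in the critical case d = α = 1 (Cauchy process):
`lim_{T→∞} (1/log T) ∫₀^T T_u φ(x) du = p₁(0) ∫ φ = (1/π) ∫ φ` for every `x`. -/
theorem cauchy_semigroup_log_limit (φ : SchwartzMap ℝ ℝ) (hφ : ∀ y, 0 ≤ φ y) (x : ℝ) :
    Tendsto (fun T : ℝ =>
      (1 / Real.log T) *
        ∫ u in Set.Ioc (0 : ℝ) T, ∫ y : ℝ, u / (π * (u ^ 2 + (x - y) ^ 2)) * φ y)
      atTop (nhds ((1 / π) * ∫ y : ℝ, φ y)) := by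
  set B : ℝ := SchwartzMap.seminorm ℝ 0 0 φ with hB_def
  have hB : ∀ y, ‖φ y‖ ≤ B := fun y => SchwartzMap.norm_le_seminorm ℝ φ y
  have hBφ : ∀ y, φ y ≤ B := fun y =>
    le_trans (le_trans (le_abs_self _) (Real.norm_eq_abs (φ y) ▸ le_refl _)) (hB y)
  have hx : ∀ᵐ (y : ℝ), y ≠ x := by
    refine ae_iff.mpr ?_
    simp [Real.volume_singleton]
  have hmain : Tendsto (fun T : ℝ => ∫ y : ℝ, φ y *
      ((Real.log (T ^ 2 + (x - y) ^ 2) - Real.log ((x - y) ^ 2)) / (2 * π * Real.log T)))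
      atTop (nhds (∫ y : ℝ, φ y * π⁻¹)) := by
    refine tendsto_integral_filter_of_dominated_convergence
      (fun y => ‖φ y‖ * ((2 + ((x - y) ^ 2 + 2 * |x - y| + 4 * |x - y| ^ (-(2:ℝ)⁻¹))) / (2 * π)))
      ?_ ?_ (G_integrable φ x hB) ?_
    · refine Eventually.of_forall fun T => ?_
      apply Measurable.aestronglyMeasurable
      exact φ.continuous.measurable.mul
        (((Real.measurable_log.comp (by fun_prop)).sub
          (Real.measurable_log.comp (by fun_prop))).div_const _)
    · filter_upwards [eventually_ge_atTop (3:ℝ)] with T hT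
      refine Eventually.of_forall fun y => ?_
      rw [Real.norm_of_nonneg (mul_nonneg (hφ y) (ratio_nonneg hT))]
      exact mul_le_mul (le_trans (le_abs_self _) (le_of_eq (Real.norm_eq_abs (φ y)).symm))
        (ratio_le hT) (ratio_nonneg hT) (norm_nonneg _)
    · filter_upwards [hx] with y hy
      exact (ratio_tendsto (sub_ne_zero.2 (Ne.symm hy))).const_mul (φ y)
  have heq : (fun T : ℝ => ∫ y : ℝ, φ y *
        ((Real.log (T ^ 2 + (x - y) ^ 2) - Real.log ((x - y) ^ 2)) / (2 * π * Real.log T)))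
      =ᶠ[atTop] (fun T : ℝ =>
        (1 / Real.log T) *
          ∫ u in Set.Ioc (0 : ℝ) T, ∫ y : ℝ, u / (π * (u ^ 2 + (x - y) ^ 2)) * φ y) := by
    filter_upwards [eventually_ge_atTop (3:ℝ)] with T hT
    have hT0 : (0:ℝ) < T := by linarith
    have hlog : 0 < Real.log T := Real.log_pos (by linarith)
    rw [swap_eq φ hφ hBφ hT0 x, ← integral_const_mul]
    refine integral_congr_ae (Eventually.of_forall fun y => ?_)
    simp only [one_div, div_eq_mul_inv, mul_inv]
    ring
  have hval : (∫ y : ℝ, φ y * π⁻¹) = (1 / π) * ∫ y : ℝ, φ y := by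
    rw [integral_mul_const, one_div, mul_comm]
  rw [hval] at hmain
  exact Tendsto.congr' heq hmain
end

section
/- Let φ be a nonnegative Schwartz function on ℝ, and let p_u(x) = u/(π(u² + x²)) for u > 0. Then lim_{T→∞} (1/log T) ∫_{|x| > T} ( ∫₀^T ∫_ℝ p_u(x−y) φ(y) dy du ) |x|^{−1} dx = 0. -/
open MeasureTheory Real Filter Set

section Aux

lemma cauchy_aux {u : ℝ} (hu : 0 < u) (x : ℝ) :
    Integrable (fun y : ℝ => u / (π * (u ^ 2 + (x - y) ^ 2))) ∧
    (∫ y : ℝ, u / (π * (u ^ 2 + (x - y) ^ 2))) = 1 := by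
  have hπ := Real.pi_pos
  have heq : (fun y : ℝ => u / (π * (u ^ 2 + (x - y) ^ 2)))
      = fun y => (π * u)⁻¹ * (1 + ((x - y) / u) ^ 2)⁻¹ := by
    funext y
    rw [eq_comm]
    have h : u ^ 2 + (x - y) ^ 2 = u ^ 2 * (1 + ((x - y) / u) ^ 2) := by
      field_simp
    rw [h]
    field_simp
  constructor
  · rw [heq]
    exact ((integrable_inv_one_add_sq.comp_div hu.ne').comp_sub_left x).const_mul _
  · rw [heq, MeasureTheory.integral_const_mul]
    have h1 : (∫ y : ℝ, (1 + ((x - y) / u) ^ 2)⁻¹) = ∫ y : ℝ, (1 + (y / u) ^ 2)⁻¹ :=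
      integral_sub_left_eq_self (fun z : ℝ => (1 + (z / u) ^ 2)⁻¹) volume x
    rw [h1, MeasureTheory.Measure.integral_comp_div (fun z : ℝ => (1 + z ^ 2)⁻¹) u,
      integral_univ_inv_one_add_sq, smul_eq_mul, abs_of_pos hu]
    field_simp

lemma abs_cube_int {T : ℝ} (hT : 0 < T) :
    IntegrableOn (fun x : ℝ => (|x| ^ 3)⁻¹) {x : ℝ | T < |x|} ∧
    (∫ x in {x : ℝ | T < |x|}, (|x| ^ 3)⁻¹) = (T ^ 2)⁻¹ := by
  have hS : {x : ℝ | T < |x|} = Iio (-T) ∪ Ioi T := by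
    ext x
    simp only [mem_setOf_eq, lt_abs, mem_union, mem_Iio, mem_Ioi, lt_neg]
    tauto
  have heqOn : EqOn (fun x : ℝ => x ^ (-3 : ℝ)) (fun x : ℝ => (|x| ^ 3)⁻¹) (Ioi T) := by
    intro x hx
    have hx0 : 0 < x := hT.trans hx
    simp only
    rw [abs_of_pos hx0, ← Real.rpow_natCast x 3, ← Real.rpow_neg hx0.le]
    norm_num
  have hIoi : IntegrableOn (fun x : ℝ => (|x| ^ 3)⁻¹) (Ioi T) :=
    (integrableOn_Ioi_rpow_of_lt (by norm_num) hT).congr_fun heqOn measurableSet_Ioi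
  have hvalIoi : (∫ x in Ioi T, (|x| ^ 3)⁻¹) = (T ^ 2)⁻¹ / 2 := by
    rw [← setIntegral_congr_fun measurableSet_Ioi heqOn,
      integral_Ioi_rpow_of_lt (by norm_num) hT]
    rw [show (-3 : ℝ) + 1 = -2 by norm_num, Real.rpow_neg hT.le]
    rw [show (2 : ℝ) = ((2 : ℕ) : ℝ) by norm_num, Real.rpow_natCast]
    ring
  have A : MeasurableEmbedding (fun x : ℝ => -x) := (Homeomorph.neg ℝ).measurableEmbedding
  have hIic : IntegrableOn (fun x : ℝ => (|x| ^ 3)⁻¹) (Iic (-T)) := by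
    have hpre : (fun x : ℝ => -x) ⁻¹' (Iic (-T)) = Ici T := by
      ext z; simp [neg_le_neg_iff]
    have hcomp : ((fun x : ℝ => (|x| ^ 3)⁻¹) ∘ (fun x : ℝ => -x)) = fun x : ℝ => (|x| ^ 3)⁻¹ := by
      funext z; simp [abs_neg]
    have h2 : IntegrableOn ((fun x : ℝ => (|x| ^ 3)⁻¹) ∘ fun x : ℝ => -x)
        ((fun x : ℝ => -x) ⁻¹' Iic (-T)) volume := by
      rw [hpre, hcomp]
      exact Iff.mpr integrableOn_Ici_iff_integrableOn_Ioi hIoi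
    have h3 := (A.integrableOn_map_iff (f := fun x : ℝ => (|x| ^ 3)⁻¹) (s := Iic (-T))).mpr h2
    have hmap : Measure.map (fun x : ℝ => -x) volume = volume := Measure.map_neg_eq_self volume
    rwa [hmap] at h3
  have hIio : IntegrableOn (fun x : ℝ => (|x| ^ 3)⁻¹) (Iio (-T)) :=
    hIic.mono_set Iio_subset_Iic_self
  have hvalIio : (∫ x in Iio (-T), (|x| ^ 3)⁻¹) = (T ^ 2)⁻¹ / 2 := by
    rw [← integral_Iic_eq_integral_Iio]
    have : (∫ x in Iic (-T), (|x| ^ 3)⁻¹) = ∫ x in Iic (-T), (|(-x)| ^ 3)⁻¹ := by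
      simp [abs_neg]
    rw [this, show (∫ x in Iic (-T), (|(-x)| ^ 3)⁻¹) = ∫ x in Ioi T, (|x| ^ 3)⁻¹ from by
      simpa using integral_comp_neg_Iic (-T) (fun t : ℝ => (|t| ^ 3)⁻¹), hvalIoi]
  have hdisj : Disjoint (Iio (-T)) (Ioi T) := by
    apply Set.disjoint_left.mpr
    intro x hx hx'
    simp only [mem_Iio] at hx
    simp only [mem_Ioi] at hx'
    linarith
  constructor
  · rw [hS]
    exact hIio.union hIoi
  · rw [hS, setIntegral_union hdisj measurableSet_Ioi hIio hIoi, hvalIio, hvalIoi]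
    ring

lemma key_pointwise {φ : ℝ → ℝ} (hφ : ∀ y, 0 ≤ φ y) {M x u : ℝ}
    (hM : ∀ y, |y| ^ 3 * φ y ≤ M) (hM0 : 0 ≤ M) (hu : 0 < u) (hx : 0 < |x|) (y : ℝ) :
    u / (π * (u ^ 2 + (x - y) ^ 2)) * φ y ≤
      4 * u / (π * x ^ 2) * φ y + 8 * M / |x| ^ 3 * (u / (π * (u ^ 2 + (x - y) ^ 2))) := by
  have hπ := Real.pi_pos
  have hp : 0 ≤ u / (π * (u ^ 2 + (x - y) ^ 2)) := div_nonneg hu.le (by positivity)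
  have hx0 : x ≠ 0 := by intro h; rw [h] at hx; simp at hx
  have hx2 : 0 < x ^ 2 := by positivity
  have hx3 : 0 < |x| ^ 3 := by positivity
  rcases le_or_gt (|y|) (|x| / 2) with h | h
  · have h2 : |x| / 2 ≤ |x - y| := by
      have := abs_sub_abs_le_abs_sub x y
      linarith
    have h3 : x ^ 2 / 4 ≤ (x - y) ^ 2 := by
      nlinarith [sq_abs (x - y), sq_abs x, abs_nonneg (x - y), abs_nonneg x]
    have hle : u / (π * (u ^ 2 + (x - y) ^ 2)) ≤ 4 * u / (π * x ^ 2) := by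
      rw [div_le_div_iff₀ (by positivity) (by positivity)]
      nlinarith [mul_le_mul_of_nonneg_left h3 (mul_nonneg hu.le hπ.le),
        mul_nonneg (mul_nonneg hu.le hπ.le) (sq_nonneg u)]
    have := mul_le_mul_of_nonneg_right hle (hφ y)
    have h4 : 0 ≤ 8 * M / |x| ^ 3 * (u / (π * (u ^ 2 + (x - y) ^ 2))) := mul_nonneg (by positivity) hp
    linarith
  · have hyx : |x| ^ 3 / 8 ≤ |y| ^ 3 := by
      have h5 : (|x| / 2) ^ 3 ≤ |y| ^ 3 :=
        pow_le_pow_left₀ (by positivity) h.le 3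
      nlinarith
    have hφy : φ y ≤ 8 * M / |x| ^ 3 := by
      rw [le_div_iff₀ hx3]
      nlinarith [hM y, mul_le_mul_of_nonneg_right hyx (hφ y)]
    have := mul_le_mul_of_nonneg_left hφy hp
    have h4 : 0 ≤ 4 * u / (π * x ^ 2) * φ y := by
      have := hφ y; positivity
    nlinarith

end Aux

/-- Property (3.43) in the critical case d = α = 1 (Cauchy process):
`lim_{T→∞} (1/log T) ∫_{|x|>T} (∫₀^T T_u φ(x) du) |x|⁻¹ dx = 0`. -/
theorem cauchy_semigroup_tail_limit (φ : SchwartzMap ℝ ℝ) (hφ : ∀ y, 0 ≤ φ y) :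
    Tendsto (fun T : ℝ =>
      (1 / Real.log T) *
        ∫ x in {x : ℝ | T < |x|},
          (∫ u in Set.Ioc (0 : ℝ) T, ∫ y : ℝ, u / (π * (u ^ 2 + (x - y) ^ 2)) * φ y) * |x|⁻¹)
      atTop (nhds 0) := by
  have hπ := Real.pi_pos
  obtain ⟨M, hM⟩ : ∃ M, ∀ y, |y| ^ 3 * φ y ≤ M := by
    obtain ⟨M, hM⟩ := φ.decay 3 0
    refine ⟨M, fun y => ?_⟩
    have := hM.2 y
    rwa [norm_iteratedFDeriv_zero, Real.norm_eq_abs, Real.norm_eq_abs,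
      abs_of_nonneg (hφ y)] at this
  have hM0 : 0 ≤ M := by
    have := hM 0
    simpa using this
  set Iφ : ℝ := ∫ y, φ y with hIφdef
  have hIφ0 : 0 ≤ Iφ := integral_nonneg hφ
  set C : ℝ := 2 * Iφ / π + 8 * M with hCdef
  have hC0 : 0 ≤ C := by positivity
  set F : ℝ → ℝ := fun T =>
    ∫ x in {x : ℝ | T < |x|},
      (∫ u in Set.Ioc (0 : ℝ) T, ∫ y : ℝ, u / (π * (u ^ 2 + (x - y) ^ 2)) * φ y) * |x|⁻¹
    with hFdef
  -- nonnegativity of F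
  have hFnonneg : ∀ T : ℝ, 0 < T → 0 ≤ F T := by
    intro T hT
    apply setIntegral_nonneg (measurableSet_lt measurable_const continuous_abs.measurable)
    intro x _
    apply mul_nonneg _ (inv_nonneg.mpr (abs_nonneg x))
    apply setIntegral_nonneg measurableSet_Ioc
    intro u hu
    exact integral_nonneg fun y =>
      mul_nonneg (div_nonneg hu.1.le (by positivity)) (hφ y)
  -- the key bound
  have hFbound : ∀ T : ℝ, 1 ≤ T → F T ≤ C := by
    intro T hT
    have hT0 : 0 < T := lt_of_lt_of_le one_pos hT
    set K : ℝ := 2 * T ^ 2 * Iφ / π + 8 * M with hKdef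
    have hK0 : 0 ≤ K := by positivity
    -- pointwise bound on the set
    have hpt : ∀ x : ℝ, T < |x| →
        (∫ u in Set.Ioc (0 : ℝ) T, ∫ y : ℝ, u / (π * (u ^ 2 + (x - y) ^ 2)) * φ y) * |x|⁻¹
          ≤ K * (|x| ^ 3)⁻¹ := by
      intro x hx
      have hxpos : 0 < |x| := hT0.trans hx
      have hx0 : x ≠ 0 := by intro h; rw [h] at hxpos; simp at hxpos
      have hx2 : 0 < x ^ 2 := by positivity
      have hx3 : 0 < |x| ^ 3 := by positivity
      -- bound on the y-integral, for u ∈ Ioc 0 T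
      have hy : ∀ u : ℝ, u ∈ Set.Ioc (0 : ℝ) T →
          (∫ y : ℝ, u / (π * (u ^ 2 + (x - y) ^ 2)) * φ y)
            ≤ 4 * Iφ / (π * x ^ 2) * u + 8 * M / |x| ^ 3 := by
        intro u hu
        have hu0 : 0 < u := hu.1
        have hgint : Integrable (fun y : ℝ =>
            4 * u / (π * x ^ 2) * φ y + 8 * M / |x| ^ 3 * (u / (π * (u ^ 2 + (x - y) ^ 2)))) :=
          ((φ.integrable (μ := volume)).const_mul _).add
            (((cauchy_aux hu0 x).1).const_mul _)
        have hmono := integral_mono_of_nonneg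
          (Eventually.of_forall fun y =>
            mul_nonneg (div_nonneg hu0.le (by positivity)) (hφ y))
          hgint
          (Eventually.of_forall (key_pointwise hφ hM hM0 hu0 hxpos))
        have hval : (∫ y : ℝ,
            (4 * u / (π * x ^ 2) * φ y + 8 * M / |x| ^ 3 * (u / (π * (u ^ 2 + (x - y) ^ 2)))))
            = 4 * Iφ / (π * x ^ 2) * u + 8 * M / |x| ^ 3 := by
          rw [integral_add ((φ.integrable (μ := volume)).const_mul _)
            (((cauchy_aux hu0 x).1).const_mul _), MeasureTheory.integral_const_mul,
            MeasureTheory.integral_const_mul, (cauchy_aux hu0 x).2, mul_one, ← hIφdef]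
          ring
        calc (∫ y : ℝ, u / (π * (u ^ 2 + (x - y) ^ 2)) * φ y) ≤ _ := hmono
          _ = _ := hval
      -- bound on the u-integral
      have hu_bound : (∫ u in Set.Ioc (0 : ℝ) T, ∫ y : ℝ, u / (π * (u ^ 2 + (x - y) ^ 2)) * φ y)
          ≤ 2 * T ^ 2 * Iφ / (π * x ^ 2) + 8 * M * T / |x| ^ 3 := by
        have hgc : Continuous (fun u : ℝ => 4 * Iφ / (π * x ^ 2) * u + 8 * M / |x| ^ 3) :=
          (continuous_const.mul continuous_id).add continuous_const
        have hgint : IntegrableOn (fun u : ℝ => 4 * Iφ / (π * x ^ 2) * u + 8 * M / |x| ^ 3)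
            (Set.Ioc (0 : ℝ) T) := hgc.integrableOn_Ioc
        have hmono := integral_mono_of_nonneg
          (g := fun u : ℝ => 4 * Iφ / (π * x ^ 2) * u + 8 * M / |x| ^ 3)
          ((ae_restrict_mem measurableSet_Ioc).mono fun u hu =>
            integral_nonneg fun y =>
              mul_nonneg (div_nonneg hu.1.le (by positivity)) (hφ y))
          hgint
          ((ae_restrict_mem measurableSet_Ioc).mono hy)
        have hval : (∫ u in Set.Ioc (0 : ℝ) T, (4 * Iφ / (π * x ^ 2) * u + 8 * M / |x| ^ 3))
            = 2 * T ^ 2 * Iφ / (π * x ^ 2) + 8 * M * T / |x| ^ 3 := by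
          have h1 : IntervalIntegrable (fun u : ℝ => 4 * Iφ / (π * x ^ 2) * u)
              volume 0 T := by
            apply Continuous.intervalIntegrable; fun_prop
          rw [← intervalIntegral.integral_of_le hT0.le,
            intervalIntegral.integral_add h1 intervalIntegrable_const,
            intervalIntegral.integral_const_mul, integral_id,
            intervalIntegral.integral_const]
          simp only [smul_eq_mul]
          ring
        exact hmono.trans (le_of_eq hval)
      -- combine
      refine (mul_le_mul_of_nonneg_right hu_bound (inv_nonneg.mpr (abs_nonneg x))).trans ?_
      have habs2 : x ^ 2 = |x| ^ 2 := (sq_abs x).symm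
      have hxabs : |x| ≠ 0 := ne_of_gt hxpos
      calc (2 * T ^ 2 * Iφ / (π * x ^ 2) + 8 * M * T / |x| ^ 3) * |x|⁻¹
          = 2 * T ^ 2 * Iφ / π * (|x| ^ 3)⁻¹ + 8 * M * (|x| ^ 3)⁻¹ * (T * |x|⁻¹) := by
            rw [habs2]
            have hxabs' : |x| ≠ 0 := hxabs
            generalize |x| = a at hxabs' ⊢
            field_simp
        _ ≤ 2 * T ^ 2 * Iφ / π * (|x| ^ 3)⁻¹ + 8 * M * (|x| ^ 3)⁻¹ * 1 := by
            have hT1 : T * |x|⁻¹ ≤ 1 := by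
              rw [← div_eq_mul_inv, div_le_one hxpos]
              exact hx.le
            have : 0 ≤ 8 * M * (|x| ^ 3)⁻¹ := by positivity
            nlinarith
        _ = K * (|x| ^ 3)⁻¹ := by rw [hKdef]; ring
    -- integrate the bound
    have hSmeas : MeasurableSet {x : ℝ | T < |x|} :=
      measurableSet_lt measurable_const continuous_abs.measurable
    have hmain := integral_mono_of_nonneg
      (g := fun x : ℝ => K * (|x| ^ 3)⁻¹)
      ((ae_restrict_mem hSmeas).mono fun x hx =>
        mul_nonneg
          (setIntegral_nonneg measurableSet_Ioc fun u hu =>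
            integral_nonneg fun y =>
              mul_nonneg (div_nonneg hu.1.le (by positivity)) (hφ y))
          (inv_nonneg.mpr (abs_nonneg x)))
      (((abs_cube_int hT0).1).const_mul K)
      ((ae_restrict_mem hSmeas).mono hpt)
    have hval : (∫ x in {x : ℝ | T < |x|}, K * (|x| ^ 3)⁻¹) = K * (T ^ 2)⁻¹ := by
      rw [MeasureTheory.integral_const_mul, (abs_cube_int hT0).2]
    have hKT : K * (T ^ 2)⁻¹ ≤ C := by
      have hT2 : (0 : ℝ) < T ^ 2 := by positivity
      have heq : K * (T ^ 2)⁻¹ = 2 * Iφ / π + 8 * M / T ^ 2 := by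
        rw [hKdef]; field_simp
      have hT2' : (1 : ℝ) ≤ T ^ 2 := by nlinarith
      have hle : 8 * M / T ^ 2 ≤ 8 * M := by
        rw [div_le_iff₀ hT2]
        nlinarith [mul_le_mul_of_nonneg_left hT2' hM0]
      rw [heq, hCdef]; linarith
    calc F T ≤ _ := hmain
      _ = K * (T ^ 2)⁻¹ := hval
      _ ≤ C := hKT
  -- conclude by squeezing
  apply squeeze_zero' (g := fun T : ℝ => (1 / Real.log T) * C)
  · filter_upwards [eventually_ge_atTop (1 : ℝ)] with T hT
    exact mul_nonneg (div_nonneg zero_le_one (Real.log_nonneg hT))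
      (hFnonneg T (lt_of_lt_of_le one_pos hT))
  · filter_upwards [eventually_ge_atTop (1 : ℝ)] with T hT
    exact mul_le_mul_of_nonneg_left (hFbound T hT)
      (div_nonneg zero_le_one (Real.log_nonneg hT))
  · have h1 : Tendsto (fun T : ℝ => (Real.log T)⁻¹) atTop (nhds 0) :=
      Real.tendsto_log_atTop.inv_tendsto_atTop
    simpa [one_div] using h1.mul_const C
end

section
/- Let φ be a nonnegative Schwartz function on ℝ², and let p_u(x) = (4πu)^{−1} exp(−‖x‖²/(4u)) for u > 0. Then there exists a constant C > 0 such that for all T > 2 and all x ∈ ℝ², (1/log T) ∫₀^T ( ∫_{ℝ²} p_u(x−y) φ(y) dy ) du ≤ C. -/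
open MeasureTheory Real

lemma gauss_integrable {b : ℝ} (hb : 0 < b) :
    Integrable (fun v : EuclideanSpace ℝ (Fin 2) ↦ Real.exp (-b * ‖v‖ ^ 2)) := by
  have h := (GaussianFourier.integrable_cexp_neg_mul_sq_norm_add
    (V := EuclideanSpace ℝ (Fin 2))
    (show 0 < (b : ℂ).re from hb) 0 (0 : EuclideanSpace ℝ (Fin 2))).norm
  convert h using 2 with v
  rw [Complex.norm_exp]
  congr 1
  have : (-(b:ℂ) * (‖v‖:ℂ) ^ 2 + 0 * ((inner ℝ 0 v : ℝ) : ℂ)) = ((-b * ‖v‖ ^ 2 : ℝ) : ℂ) := by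
    push_cast; ring
  rw [this, Complex.ofReal_re]

lemma gauss_int (u : ℝ) (hu : 0 < u) (x : EuclideanSpace ℝ (Fin 2)) :
    ∫ y : EuclideanSpace ℝ (Fin 2),
      (4 * π * u)⁻¹ * Real.exp (-‖x - y‖ ^ 2 / (4 * u)) = 1 := by
  have hb : 0 < (4 * u)⁻¹ := by positivity
  have h1 : (fun y : EuclideanSpace ℝ (Fin 2) ↦
        (4 * π * u)⁻¹ * Real.exp (-‖x - y‖ ^ 2 / (4 * u)))
      = fun y : EuclideanSpace ℝ (Fin 2) ↦
        (4 * π * u)⁻¹ * Real.exp (-(4 * u)⁻¹ * ‖x - y‖ ^ 2) := by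
    funext y; congr 1; ring_nf
  rw [h1, integral_const_mul,
    integral_sub_left_eq_self
      (fun y : EuclideanSpace ℝ (Fin 2) ↦ Real.exp (-(4 * u)⁻¹ * ‖y‖ ^ 2)) volume x,
    GaussianFourier.integral_rexp_neg_mul_sq_norm hb]
  have h2 : (Module.finrank ℝ (EuclideanSpace ℝ (Fin 2)) : ℝ) / 2 = 1 := by
    simp [finrank_euclideanSpace_fin]
  rw [h2, Real.rpow_one]
  have hπ : (0:ℝ) < π := Real.pi_pos
  field_simp

lemma gauss_integrable' (u : ℝ) (hu : 0 < u) (x : EuclideanSpace ℝ (Fin 2)) :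
    Integrable (fun y : EuclideanSpace ℝ (Fin 2) ↦
      Real.exp (-‖x - y‖ ^ 2 / (4 * u))) := by
  have hb : 0 < (4 * u)⁻¹ := by positivity
  have h1 : (fun y : EuclideanSpace ℝ (Fin 2) ↦ Real.exp (-‖x - y‖ ^ 2 / (4 * u)))
      = fun y ↦ Real.exp (-(4 * u)⁻¹ * ‖x - y‖ ^ 2) := by
    funext y; congr 1; ring_nf
  rw [h1, integrable_comp_sub_left
    (fun y : EuclideanSpace ℝ (Fin 2) ↦ Real.exp (-(4 * u)⁻¹ * ‖y‖ ^ 2)) x]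
  exact gauss_integrable hb

/-- Property (3.41) in the critical case d = α = 2 (planar Brownian motion):
`sup_{T>2} sup_x (1/log T) ∫₀^T T_u φ(x) du < ∞`. -/
theorem brownian_semigroup_log_bound (φ : SchwartzMap (EuclideanSpace ℝ (Fin 2)) ℝ)
    (hφ : ∀ y, 0 ≤ φ y) :
    ∃ C > 0, ∀ T > (2 : ℝ), ∀ x : EuclideanSpace ℝ (Fin 2),
      (1 / Real.log T) *
        ∫ u in Set.Ioc (0 : ℝ) T, ∫ y : EuclideanSpace ℝ (Fin 2),
          (4 * π * u)⁻¹ * Real.exp (-‖x - y‖ ^ 2 / (4 * u)) * φ y ≤ C := by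
  have hπ : (0:ℝ) < π := Real.pi_pos
  -- sup bound on φ
  obtain ⟨A, hApos, hA⟩ := φ.decay 0 0
  have hA' : ∀ y, φ y ≤ A := by
    intro y
    have := hA y
    simp only [pow_zero, one_mul, norm_iteratedFDeriv_zero] at this
    calc φ y ≤ ‖φ y‖ := le_abs_self _
    _ ≤ A := this
  have hA0 : 0 ≤ A := le_trans (hφ 0) (hA' 0)
  set B : ℝ := ∫ y : EuclideanSpace ℝ (Fin 2), φ y with hB
  have hB0 : 0 ≤ B := integral_nonneg hφ
  have hlog2 : 0 < Real.log 2 := Real.log_pos one_lt_two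
  refine ⟨A / Real.log 2 + B / (4 * π) + 1, by positivity, fun T hT x ↦ ?_⟩
  have hlogT : 0 < Real.log T := Real.log_pos (by linarith)
  have hlogle : Real.log 2 ≤ Real.log T := Real.log_le_log (by norm_num) (by linarith)
  set g : ℝ → ℝ := fun u ↦ ∫ y : EuclideanSpace ℝ (Fin 2),
    (4 * π * u)⁻¹ * Real.exp (-‖x - y‖ ^ 2 / (4 * u)) * φ y with hg
  have hg0 : ∀ u, 0 < u → 0 ≤ g u := by
    intro u hu
    apply integral_nonneg
    intro y
    have h0 : 0 ≤ (4 * π * u)⁻¹ := by positivity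
    exact mul_nonneg (mul_nonneg h0 (Real.exp_nonneg _)) (hφ y)
  -- bound 1: g u ≤ A
  have hgA : ∀ u, 0 < u → g u ≤ A := by
    intro u hu
    have hmaj : Integrable (fun y : EuclideanSpace ℝ (Fin 2) ↦
        (4 * π * u)⁻¹ * Real.exp (-‖x - y‖ ^ 2 / (4 * u)) * A) :=
      (((gauss_integrable' u hu x).const_mul _).mul_const _)
    have h1 : g u ≤ ∫ y : EuclideanSpace ℝ (Fin 2),
        (4 * π * u)⁻¹ * Real.exp (-‖x - y‖ ^ 2 / (4 * u)) * A := by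
      apply integral_mono_of_nonneg (Filter.Eventually.of_forall fun y ↦ by
        have h0 : 0 ≤ (4 * π * u)⁻¹ := by positivity
        exact mul_nonneg (mul_nonneg h0 (Real.exp_nonneg _)) (hφ y)) hmaj
      apply Filter.Eventually.of_forall
      intro y
      apply mul_le_mul_of_nonneg_left (hA' y)
      have h0 : 0 ≤ (4 * π * u)⁻¹ := by positivity
      exact mul_nonneg h0 (Real.exp_nonneg _)
    calc g u ≤ _ := h1
    _ = (∫ y : EuclideanSpace ℝ (Fin 2),
          (4 * π * u)⁻¹ * Real.exp (-‖x - y‖ ^ 2 / (4 * u))) * A := by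
        rw [← integral_mul_const]
    _ = A := by rw [gauss_int u hu x, one_mul]
  -- bound 2: g u ≤ (4πu)⁻¹ * B
  have hgB : ∀ u, 0 < u → g u ≤ (4 * π * u)⁻¹ * B := by
    intro u hu
    have h1 : g u ≤ ∫ y : EuclideanSpace ℝ (Fin 2), (4 * π * u)⁻¹ * φ y := by
      apply integral_mono_of_nonneg (Filter.Eventually.of_forall fun y ↦ by
        have h0 : 0 ≤ (4 * π * u)⁻¹ := by positivity
        exact mul_nonneg (mul_nonneg h0 (Real.exp_nonneg _)) (hφ y)) (φ.integrable.const_mul _)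
      apply Filter.Eventually.of_forall
      intro y
      have he : Real.exp (-‖x - y‖ ^ 2 / (4 * u)) ≤ 1 :=
        Real.exp_le_one_iff.2 (by
          apply div_nonpos_of_nonpos_of_nonneg
          · simp only [neg_nonpos]
            positivity
          · positivity)
      have h0 : 0 ≤ (4 * π * u)⁻¹ := by positivity
      calc (4 * π * u)⁻¹ * Real.exp (-‖x - y‖ ^ 2 / (4 * u)) * φ y
          ≤ (4 * π * u)⁻¹ * 1 * φ y := by
            apply mul_le_mul_of_nonneg_right _ (hφ y)
            exact mul_le_mul_of_nonneg_left he h0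
      _ = (4 * π * u)⁻¹ * φ y := by ring
    rwa [integral_const_mul] at h1
  -- the majorant
  set h : ℝ → ℝ := fun u ↦ min A ((4 * π * u)⁻¹ * B) with hh
  have hhmeas : Measurable h :=
    measurable_const.min (((measurable_id.const_mul (4 * π)).inv).mul_const B)
  have hhle : ∀ u : ℝ, 0 < u → 0 ≤ h u ∧ h u ≤ A := by
    intro u hu
    refine ⟨le_min hA0 (by positivity), min_le_left _ _⟩
  have hhint : ∀ a b : ℝ, 0 ≤ a → IntegrableOn h (Set.Ioc a b) := by
    intro a b ha
    apply Integrable.mono' (integrable_const A) hhmeas.aestronglyMeasurable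
    rw [ae_restrict_iff' measurableSet_Ioc]
    apply Filter.Eventually.of_forall
    intro u hu
    obtain ⟨h1, h2⟩ := hhle u (lt_of_le_of_lt ha hu.1)
    rw [Real.norm_eq_abs, abs_of_nonneg h1]
    exact h2
  -- main estimate
  have step1 : ∫ u in Set.Ioc (0:ℝ) T, g u ≤ ∫ u in Set.Ioc (0:ℝ) T, h u := by
    apply integral_mono_of_nonneg _ (hhint 0 T le_rfl)
    · rw [Filter.EventuallyLE, ae_restrict_iff' measurableSet_Ioc]
      exact Filter.Eventually.of_forall fun u hu ↦ le_min (hgA u hu.1) (hgB u hu.1)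
    · rw [Filter.EventuallyLE, ae_restrict_iff' measurableSet_Ioc]
      exact Filter.Eventually.of_forall fun u hu ↦ hg0 u hu.1
  have hsplit : ∫ u in Set.Ioc (0:ℝ) T, h u
      = (∫ u in Set.Ioc (0:ℝ) 1, h u) + ∫ u in Set.Ioc (1:ℝ) T, h u := by
    rw [← Set.Ioc_union_Ioc_eq_Ioc (by norm_num : (0:ℝ) ≤ 1) (by linarith : (1:ℝ) ≤ T),
      setIntegral_union (Set.Ioc_disjoint_Ioc_of_le le_rfl) measurableSet_Ioc
        (hhint 0 1 le_rfl) (hhint 1 T (by norm_num))]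
  have step2 : ∫ u in Set.Ioc (0:ℝ) 1, h u ≤ A := by
    have : ∫ u in Set.Ioc (0:ℝ) 1, h u ≤ ∫ _u in Set.Ioc (0:ℝ) 1, A :=
      setIntegral_mono_on (hhint 0 1 le_rfl)
        (integrableOn_const measure_Ioc_lt_top.ne) measurableSet_Ioc
        (fun u _ ↦ min_le_left _ _)
    calc ∫ u in Set.Ioc (0:ℝ) 1, h u ≤ ∫ _u in Set.Ioc (0:ℝ) 1, A := this
    _ = A := by simp [Real.volume_Ioc]
  have hinv : IntegrableOn (fun u : ℝ ↦ u⁻¹) (Set.Ioc (1:ℝ) T) := by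
    have := (intervalIntegral.intervalIntegrable_inv (μ := volume) (a := (1:ℝ)) (b := T) (f := fun x ↦ x)
      (fun x hx ↦ by
        rw [Set.uIcc_of_le (by linarith : (1:ℝ) ≤ T)] at hx
        exact ne_of_gt (lt_of_lt_of_le one_pos hx.1)) continuousOn_id).1
    exact this
  have step3 : ∫ u in Set.Ioc (1:ℝ) T, h u ≤ B / (4 * π) * Real.log T := by
    have hle : ∀ u ∈ Set.Ioc (1:ℝ) T, h u ≤ B / (4 * π) * u⁻¹ := by
      intro u hu
      have hu0 : (0:ℝ) < u := lt_trans one_pos hu.1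
      calc h u ≤ (4 * π * u)⁻¹ * B := min_le_right _ _
      _ = B / (4 * π) * u⁻¹ := by
        rw [mul_inv, mul_inv]
        field_simp
    have h1 : ∫ u in Set.Ioc (1:ℝ) T, h u
        ≤ ∫ u in Set.Ioc (1:ℝ) T, B / (4 * π) * u⁻¹ :=
      setIntegral_mono_on (hhint 1 T (by norm_num))
        (hinv.const_mul _) measurableSet_Ioc hle
    have h2 : ∫ u in Set.Ioc (1:ℝ) T, B / (4 * π) * u⁻¹
        = B / (4 * π) * Real.log T := by
      rw [integral_const_mul, ← intervalIntegral.integral_of_le (by linarith : (1:ℝ) ≤ T),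
        integral_inv (by
          rw [Set.uIcc_of_le (by linarith : (1:ℝ) ≤ T)]
          intro hx
          exact absurd hx.1 (by norm_num))]
      rw [div_one]
    linarith
  have key : ∫ u in Set.Ioc (0:ℝ) T, g u ≤ A + B / (4 * π) * Real.log T := by
    calc ∫ u in Set.Ioc (0:ℝ) T, g u ≤ ∫ u in Set.Ioc (0:ℝ) T, h u := step1
    _ = _ := hsplit
    _ ≤ A + B / (4 * π) * Real.log T := by linarith
  have h1T : (0:ℝ) < 1 / Real.log T := by positivity
  calc (1 / Real.log T) * ∫ u in Set.Ioc (0:ℝ) T, g u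
      ≤ (1 / Real.log T) * (A + B / (4 * π) * Real.log T) :=
        mul_le_mul_of_nonneg_left key h1T.le
  _ = A / Real.log T + B / (4 * π) := by
      field_simp
  _ ≤ A / Real.log 2 + B / (4 * π) := by
      have : A / Real.log T ≤ A / Real.log 2 := by gcongr
      linarith
  _ ≤ A / Real.log 2 + B / (4 * π) + 1 := by linarith
end

section
/- Let φ be a Schwartz function on ℝ and let p_s(x) = (4πs)^{−1/2} exp(−x²/(4s)) for s > 0. Then for every x ∈ ℝ, lim_{θ→0⁺} θ^{1/2} ∫₀^∞ e^{−θs} ( ∫_ℝ p_s(x−y) φ(y) dy ) ds = (1/2) ∫_ℝ φ(y) dy. -/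
open MeasureTheory Real Filter

lemma gh_integrable :
    IntegrableOn (fun u : ℝ => (4 * π * u) ^ (-(1 : ℝ) / 2) * Real.exp (-u)) (Set.Ioi 0) := by
  have h := Real.GammaIntegral_convergent (by norm_num : (0:ℝ) < 1/2)
  have h2 : IntegrableOn
      (fun u : ℝ => (4 * π) ^ (-(1:ℝ)/2) * (Real.exp (-u) * u ^ ((1:ℝ)/2 - 1)))
      (Set.Ioi 0) := h.const_mul _
  refine h2.congr_fun (fun u hu => ?_) measurableSet_Ioi
  rw [Set.mem_Ioi] at hu
  have h4 : (0:ℝ) ≤ 4 * π := by positivity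
  rw [Real.mul_rpow h4 hu.le]
  rw [show (1:ℝ)/2 - 1 = -(1:ℝ)/2 by norm_num]
  ring

lemma gh_integral :
    ∫ u in Set.Ioi (0:ℝ), (4 * π * u) ^ (-(1 : ℝ) / 2) * Real.exp (-u) = 1 / 2 := by
  have h4 : (0:ℝ) ≤ 4 * π := by positivity
  have hcongr : ∫ u in Set.Ioi (0:ℝ), (4 * π * u) ^ (-(1 : ℝ) / 2) * Real.exp (-u)
      = ∫ u in Set.Ioi (0:ℝ), (4 * π) ^ (-(1:ℝ)/2) * (Real.exp (-u) * u ^ ((1:ℝ)/2 - 1)) := by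
    refine setIntegral_congr_fun measurableSet_Ioi (fun u hu => ?_)
    rw [Set.mem_Ioi] at hu
    rw [Real.mul_rpow h4 hu.le, show (1:ℝ)/2 - 1 = -(1:ℝ)/2 by norm_num]
    ring
  rw [hcongr, integral_const_mul, ← Real.Gamma_eq_integral (by norm_num : (0:ℝ) < 1/2),
    Real.Gamma_one_half_eq]
  have hs4 : Real.sqrt (4 * π) = 2 * Real.sqrt π := by
    rw [show (4:ℝ) * π = 2^2 * π by norm_num, Real.sqrt_mul (by positivity), Real.sqrt_sq (by norm_num : (0:ℝ) ≤ 2)]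
  have hrw : (4 * π : ℝ) ^ (-(1:ℝ)/2) = (2 * Real.sqrt π)⁻¹ := by
    rw [neg_div, Real.rpow_neg h4, ← Real.sqrt_eq_rpow, hs4]
  rw [hrw]
  have hπ : Real.sqrt π ≠ 0 := (Real.sqrt_pos.mpr pi_pos).ne'
  field_simp

/-- Resolvent limit (3.64) for α = 2 (so α' = 1/2, K = 1/2):
`lim_{θ→0⁺} θ^{1/2} ∫₀^∞ e^{−θs} (p_s * φ)(x) ds = (1/2) ∫ φ` for every `x`. -/
theorem resolvent_limit (φ : SchwartzMap ℝ ℝ) (x : ℝ) :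
    Tendsto (fun θ : ℝ =>
      θ ^ ((1 : ℝ) / 2) *
        ∫ s in Set.Ioi (0 : ℝ),
          Real.exp (-θ * s) *
            ∫ y : ℝ, (4 * π * s) ^ (-(1 : ℝ) / 2) * Real.exp (-(x - y) ^ 2 / (4 * s)) * φ y)
      (nhdsWithin 0 (Set.Ioi 0)) (nhds ((1 / 2) * ∫ y : ℝ, φ y)) := by
  have hφint : Integrable (fun y : ℝ => (φ y : ℝ)) := φ.integrable
  set I : ℝ := ∫ y : ℝ, φ y with hI
  set C : ℝ := ∫ y : ℝ, |φ y| with hC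
  set H : ℝ → ℝ → ℝ := fun θ u => ∫ y : ℝ, Real.exp (-θ * (x - y) ^ 2 / (4 * u)) * φ y with hH
  -- pointwise bound on the inner integrand
  have hbnd : ∀ θ : ℝ, 0 ≤ θ → ∀ u : ℝ, 0 < u → ∀ y : ℝ,
      ‖Real.exp (-θ * (x - y) ^ 2 / (4 * u)) * φ y‖ ≤ |φ y| := by
    intro θ hθ u hu y
    have hnum : -θ * (x - y) ^ 2 ≤ 0 := by nlinarith [sq_nonneg (x - y)]
    have hexp : Real.exp (-θ * (x - y) ^ 2 / (4 * u)) ≤ 1 := by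
      have hle : -θ * (x - y) ^ 2 / (4 * u) ≤ 0 :=
        div_nonpos_of_nonpos_of_nonneg hnum (by positivity)
      simpa using Real.exp_le_exp.mpr hle
    rw [norm_mul, Real.norm_eq_abs, Real.norm_eq_abs, abs_of_pos (Real.exp_pos _)]
    exact mul_le_of_le_one_left (abs_nonneg _) hexp
  -- H bound
  have hHbnd : ∀ θ : ℝ, 0 ≤ θ → ∀ u : ℝ, 0 < u → ‖H θ u‖ ≤ C := by
    intro θ hθ u hu
    calc ‖H θ u‖ ≤ ∫ y : ℝ, ‖Real.exp (-θ * (x - y) ^ 2 / (4 * u)) * φ y‖ :=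
          norm_integral_le_integral_norm _
      _ ≤ ∫ y : ℝ, |φ y| := by
          refine integral_mono_of_nonneg (ae_of_all _ fun y => norm_nonneg _) hφint.abs
            (ae_of_all _ fun y => hbnd θ hθ u hu y)
  -- measurability of H θ
  have hHmeas : ∀ θ : ℝ, StronglyMeasurable (H θ) := by
    intro θ
    have hf : Measurable (fun p : ℝ × ℝ =>
        Real.exp (-θ * (x - p.2) ^ 2 / (4 * p.1)) * φ p.2) := by
      have h1 : Measurable (fun p : ℝ × ℝ => -θ * (x - p.2) ^ 2 / (4 * p.1)) :=
        (measurable_const.mul ((measurable_const.sub measurable_snd).pow_const 2)).div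
          (measurable_const.mul measurable_fst)
      exact (Real.measurable_exp.comp h1).mul (φ.continuous.measurable.comp measurable_snd)
    exact hf.stronglyMeasurable.integral_prod_right'
  -- inner convergence
  have hinner : ∀ u : ℝ, 0 < u →
      Tendsto (fun θ => H θ u) (nhdsWithin 0 (Set.Ioi 0)) (nhds I) := by
    intro u hu
    rw [hI]
    refine tendsto_integral_filter_of_dominated_convergence (fun y => |φ y|) ?_ ?_ hφint.abs ?_
    · filter_upwards with θ
      have : Continuous fun y : ℝ => Real.exp (-θ * (x - y) ^ 2 / (4 * u)) * φ y := by
        exact (Real.continuous_exp.comp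
          (((continuous_const.mul ((continuous_const.sub continuous_id).pow 2)).div_const _))).mul
          φ.continuous
      exact this.aestronglyMeasurable
    · filter_upwards [self_mem_nhdsWithin] with θ hθ
      exact ae_of_all _ fun y => hbnd θ (le_of_lt hθ) u hu y
    · refine ae_of_all _ fun y => ?_
      have hc : Continuous fun θ : ℝ => Real.exp (-θ * (x - y) ^ 2 / (4 * u)) * φ y :=
        (Real.continuous_exp.comp
          (((continuous_id.neg.mul continuous_const).div_const _))).mul continuous_const
      have h0 : Tendsto (fun θ : ℝ => Real.exp (-θ * (x - y) ^ 2 / (4 * u)) * φ y)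
          (nhdsWithin 0 (Set.Ioi 0))
          (nhds (Real.exp (-(0:ℝ) * (x - y) ^ 2 / (4 * u)) * φ y)) :=
        (hc.tendsto 0).mono_left nhdsWithin_le_nhds
      simpa using h0
  -- outer convergence (dominated convergence)
  have key : Tendsto (fun θ : ℝ =>
      ∫ u in Set.Ioi (0:ℝ), (4 * π * u) ^ (-(1:ℝ)/2) * Real.exp (-u) * H θ u)
      (nhdsWithin 0 (Set.Ioi 0)) (nhds ((1/2) * I)) := by
    have hval : ∫ u in Set.Ioi (0:ℝ), (4 * π * u) ^ (-(1:ℝ)/2) * Real.exp (-u) * I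
        = 1/2 * I := by
      rw [integral_mul_const, gh_integral]
    rw [← hval]
    refine tendsto_integral_filter_of_dominated_convergence
      (fun u => (4 * π * u) ^ (-(1:ℝ)/2) * Real.exp (-u) * C) ?_ ?_ ?_ ?_
    · filter_upwards with θ
      have hc : Measurable fun u : ℝ => (4 * π * u) ^ (-(1:ℝ)/2) * Real.exp (-u) :=
        ((measurable_id.const_mul (4 * π)).pow measurable_const).mul
          (Real.measurable_exp.comp measurable_neg)
      exact ((hc.stronglyMeasurable.mul (hHmeas θ)).aestronglyMeasurable).restrict
    · filter_upwards [self_mem_nhdsWithin] with θ hθ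
      refine (ae_restrict_iff' measurableSet_Ioi).mpr (ae_of_all _ fun u hu => ?_)
      rw [Set.mem_Ioi] at hu
      have hcpos : 0 < (4 * π * u) ^ (-(1:ℝ)/2) * Real.exp (-u) := by positivity
      rw [norm_mul, Real.norm_eq_abs (((4 * π * u) ^ (-(1:ℝ)/2) * Real.exp (-u))),
        abs_of_pos hcpos]
      exact mul_le_mul_of_nonneg_left (hHbnd θ (le_of_lt hθ) u hu) hcpos.le
    · exact gh_integrable.mul_const C
    · refine (ae_restrict_iff' measurableSet_Ioi).mpr (ae_of_all _ fun u hu => ?_)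
      rw [Set.mem_Ioi] at hu
      exact (hinner u hu).const_mul _
  -- rewrite the original expression via substitution s = u / θ
  refine key.congr' ?_
  filter_upwards [self_mem_nhdsWithin] with θ hθ
  rw [Set.mem_Ioi] at hθ
  set g : ℝ → ℝ := fun s => Real.exp (-θ * s) *
      ∫ y : ℝ, (4 * π * s) ^ (-(1:ℝ)/2) * Real.exp (-(x - y) ^ 2 / (4 * s)) * φ y with hg
  have hsub := integral_comp_mul_left_Ioi g 0 (inv_pos.mpr hθ)
  rw [inv_inv, mul_zero] at hsub
  -- hsub : ∫ u in Ioi 0, g (θ⁻¹ * u) = θ • ∫ s in Ioi 0, g s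
  have hgu : ∀ u ∈ Set.Ioi (0:ℝ), g (θ⁻¹ * u)
      = θ ^ ((1:ℝ)/2) * ((4 * π * u) ^ (-(1:ℝ)/2) * Real.exp (-u) * H θ u) := by
    intro u hu
    rw [Set.mem_Ioi] at hu
    have hexp1 : -θ * (θ⁻¹ * u) = -u := by
      rw [← mul_assoc, neg_mul, mul_inv_cancel₀ hθ.ne', neg_one_mul]
    have hfun : (fun y : ℝ => (4 * π * (θ⁻¹ * u)) ^ (-(1:ℝ)/2) *
        Real.exp (-(x - y) ^ 2 / (4 * (θ⁻¹ * u))) * φ y)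
        = fun y : ℝ => (θ ^ ((1:ℝ)/2) * (4 * π * u) ^ (-(1:ℝ)/2)) *
          (Real.exp (-θ * (x - y) ^ 2 / (4 * u)) * φ y) := by
      funext y
      have hbase : 4 * π * (θ⁻¹ * u) = θ⁻¹ * (4 * π * u) := by ring
      have h1 : (θ⁻¹ * (4 * π * u)) ^ (-(1:ℝ)/2)
          = (θ⁻¹ : ℝ) ^ (-(1:ℝ)/2) * (4 * π * u) ^ (-(1:ℝ)/2) :=
        Real.mul_rpow (by positivity) (by positivity)
      have h2 : (θ⁻¹ : ℝ) ^ (-(1:ℝ)/2) = θ ^ ((1:ℝ)/2) := by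
        rw [Real.inv_rpow hθ.le, neg_div, Real.rpow_neg hθ.le, inv_inv]
      have h3 : -(x - y) ^ 2 / (4 * (θ⁻¹ * u)) = -θ * (x - y) ^ 2 / (4 * u) := by
        field_simp
      rw [hbase, h1, h2, h3]
      ring
    simp only [hg, hexp1]
    rw [hfun, integral_const_mul]
    simp only [hH]
    ring
  have hint : ∫ u in Set.Ioi (0:ℝ), g (θ⁻¹ * u)
      = θ ^ ((1:ℝ)/2) * ∫ u in Set.Ioi (0:ℝ),
          (4 * π * u) ^ (-(1:ℝ)/2) * Real.exp (-u) * H θ u := by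
    rw [setIntegral_congr_fun measurableSet_Ioi hgu, integral_const_mul]
  set X : ℝ := ∫ u in Set.Ioi (0:ℝ), (4 * π * u) ^ (-(1:ℝ)/2) * Real.exp (-u) * H θ u with hX
  have h5 : θ * ∫ s in Set.Ioi (0:ℝ), g s = θ ^ ((1:ℝ)/2) * X := by
    rw [← smul_eq_mul, ← hsub, hint]
  have hθhalf : θ ^ ((1:ℝ)/2) * θ ^ ((1:ℝ)/2) = θ := by
    rw [← Real.rpow_add hθ]
    norm_num
  have h6 : θ * (θ ^ ((1:ℝ)/2) * ∫ s in Set.Ioi (0:ℝ), g s) = θ * X := by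
    calc θ * (θ ^ ((1:ℝ)/2) * ∫ s in Set.Ioi (0:ℝ), g s)
        = θ ^ ((1:ℝ)/2) * (θ * ∫ s in Set.Ioi (0:ℝ), g s) := by ring
      _ = θ ^ ((1:ℝ)/2) * (θ ^ ((1:ℝ)/2) * X) := by rw [h5]
      _ = θ * X := by rw [← mul_assoc, hθhalf]
  exact (mul_left_cancel₀ hθ.ne' h6).symm
end

section
/- Let φ be a nonnegative Schwartz function on ℝ and let p_v(x) = (4πv)^{−1/2} exp(−x²/(4v)) for v > 0. Then there exists a constant C > 0 such that for all T ≥ 1, all y ∈ ℝ, all s ∈ [0,1], and all 0 ≤ t₁ ≤ t₂ ≤ 1, T^{1/2} ∫_{(s,1]} 1_{[t₁,t₂]}(u) ( ∫_ℝ p_{T(u−s)}(y−z) φ(z) dz ) du ≤ C (t₂ − t₁)^{1/2}. -/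
/-!
Bounding the Gaussian by its peak value gives `|(p_v * φ)(y)| ≤ (4πv)^{-1/2} ‖φ‖₁`. With `v = T(u - s)`
the factor `T^{-1/2}` cancels `T^{1/2}`, and what is left is `‖φ‖₁ (4π)^{-1/2}` times the integral of the
singular weight `(u - s)^{-1/2}` over a subset of `(s, ∞) ∩ [t₁, t₂]`. That integral is at most
`2 √(t₂ - t₁)` because the square root is subadditive.
-/

open MeasureTheory Real Set

noncomputable def heatKernel (v x : ℝ) : ℝ :=
  (4 * π * v) ^ (-(1 : ℝ) / 2) * exp (-x ^ 2 / (4 * v))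

section HeatKernel

variable {v : ℝ}

lemma heatKernel_nonneg (hv : 0 < v) (x : ℝ) : 0 ≤ heatKernel v x := by
  unfold heatKernel
  positivity

lemma heatKernel_le (hv : 0 < v) (x : ℝ) : heatKernel v x ≤ (4 * π * v) ^ (-(1 : ℝ) / 2) := by
  refine mul_le_of_le_one_right (rpow_nonneg (by positivity) _) (exp_le_one_iff.2 ?_)
  exact div_nonpos_of_nonpos_of_nonneg (neg_nonpos.2 (sq_nonneg x)) (by positivity)

lemma abs_integral_heatKernel_mul_le (hv : 0 < v) {φ : ℝ → ℝ} (hφ : Integrable φ) (y : ℝ) :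
    |∫ z, heatKernel v (y - z) * φ z| ≤ (4 * π * v) ^ (-(1 : ℝ) / 2) * ∫ z, |φ z| := by
  rw [← norm_eq_abs, ← integral_const_mul ((4 * π * v) ^ (-(1 : ℝ) / 2)) fun z => |φ z|]
  refine norm_integral_le_of_norm_le (hφ.abs.const_mul _) (ae_of_all _ fun z => ?_)
  rw [norm_mul, norm_of_nonneg (heatKernel_nonneg hv _), norm_eq_abs]
  exact mul_le_mul_of_nonneg_right (heatKernel_le hv _) (abs_nonneg _)

end HeatKernel

lemma integrableOn_sub_rpow_neg_half (s a b : ℝ) :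
    IntegrableOn (fun u : ℝ => (u - s) ^ (-(1 : ℝ) / 2)) (Icc a b) := by
  have h := (intervalIntegral.intervalIntegrable_rpow' (r := -(1 : ℝ) / 2) (a := a - s)
    (b := b - s) (by norm_num)).comp_sub_right s
  simp only [sub_add_cancel] at h
  exact ((intervalIntegrable_iff' (μ := volume)).1 h).mono_set Icc_subset_uIcc

lemma integral_Icc_sub_rpow_neg_half {s a b : ℝ} (hab : a ≤ b) :
    ∫ u in Icc a b, (u - s) ^ (-(1 : ℝ) / 2) =
      2 * ((b - s) ^ ((1 : ℝ) / 2) - (a - s) ^ ((1 : ℝ) / 2)) := by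
  rw [integral_Icc_eq_integral_Ioc, ← intervalIntegral.integral_of_le hab,
    intervalIntegral.integral_comp_sub_right (fun x => x ^ (-(1 : ℝ) / 2)) s,
    integral_rpow (Or.inl (by norm_num))]
  norm_num
  ring

lemma sub_rpow_half_sub_le {s a b : ℝ} (hsa : s ≤ a) (hab : a ≤ b) :
    (b - s) ^ ((1 : ℝ) / 2) - (a - s) ^ ((1 : ℝ) / 2) ≤ (b - a) ^ ((1 : ℝ) / 2) := by
  have h := rpow_add_le_add_rpow (sub_nonneg.2 hsa) (sub_nonneg.2 hab) (p := (1 : ℝ) / 2)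
    (by norm_num) (by norm_num)
  rw [sub_add_sub_cancel'] at h
  linarith

lemma setIntegral_sub_rpow_neg_half_le {S : Set ℝ} {s t₁ t₂ : ℝ}
    (hS : S ⊆ Ioi s ∩ Icc t₁ t₂) (ht : t₁ ≤ t₂) :
    ∫ u in S, (u - s) ^ (-(1 : ℝ) / 2) ≤ 2 * (t₂ - t₁) ^ ((1 : ℝ) / 2) := by
  set a := max s t₁
  set b := max a t₂
  have hsa : s ≤ a := le_max_left _ _
  have hab : a ≤ b := le_max_left _ _
  have hba : b - a ≤ t₂ - t₁ := by
    rcases le_total t₂ a with h | h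
    · simp only [b, max_eq_left h]
      linarith
    · simp only [b, max_eq_right h]
      linarith [le_max_right s t₁]
  have hSab : S ⊆ Icc a b := fun u hu =>
    ⟨max_le (hS hu).1.le (hS hu).2.1, (hS hu).2.2.trans (le_max_right _ _)⟩
  calc ∫ u in S, (u - s) ^ (-(1 : ℝ) / 2)
      ≤ ∫ u in Icc a b, (u - s) ^ (-(1 : ℝ) / 2) :=
        setIntegral_mono_set (integrableOn_sub_rpow_neg_half s a b)
          (ae_restrict_of_forall_mem measurableSet_Icc fun u hu =>
            rpow_nonneg (sub_nonneg.2 (hsa.trans hu.1)) _)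
          hSab.eventuallyLE
    _ = 2 * ((b - s) ^ ((1 : ℝ) / 2) - (a - s) ^ ((1 : ℝ) / 2)) :=
        integral_Icc_sub_rpow_neg_half hab
    _ ≤ 2 * (t₂ - t₁) ^ ((1 : ℝ) / 2) := by
        gcongr
        exact (sub_rpow_half_sub_le hsa hab).trans
          (rpow_le_rpow (sub_nonneg.2 hab) hba (by norm_num))

lemma abs_setIntegral_heatKernel_mul_le {φ : ℝ → ℝ} (hφ : Integrable φ) {T : ℝ} (hT : 0 < T)
    (y : ℝ) {S : Set ℝ} {s t₁ t₂ : ℝ} (hSm : MeasurableSet S) (hS : S ⊆ Ioi s ∩ Icc t₁ t₂)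
    (ht : t₁ ≤ t₂) :
    |∫ u in S, ∫ z, heatKernel (T * (u - s)) (y - z) * φ z| ≤
      (4 * π * T) ^ (-(1 : ℝ) / 2) * (∫ z, |φ z|) * (2 * (t₂ - t₁) ^ ((1 : ℝ) / 2)) := by
  have hpointwise : ∀ u ∈ S, ‖∫ z, heatKernel (T * (u - s)) (y - z) * φ z‖ ≤
      (4 * π * T) ^ (-(1 : ℝ) / 2) * (∫ z, |φ z|) * (u - s) ^ (-(1 : ℝ) / 2) := by
    intro u hu
    have hus : 0 < u - s := sub_pos.2 (hS hu).1
    calc ‖∫ z, heatKernel (T * (u - s)) (y - z) * φ z‖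
        ≤ (4 * π * (T * (u - s))) ^ (-(1 : ℝ) / 2) * ∫ z, |φ z| :=
          abs_integral_heatKernel_mul_le (mul_pos hT hus) hφ y
      _ = (4 * π * T) ^ (-(1 : ℝ) / 2) * (∫ z, |φ z|) * (u - s) ^ (-(1 : ℝ) / 2) := by
          rw [← mul_assoc, mul_rpow (by positivity) hus.le]
          ring
  calc |∫ u in S, ∫ z, heatKernel (T * (u - s)) (y - z) * φ z|
      ≤ ∫ u in S, (4 * π * T) ^ (-(1 : ℝ) / 2) * (∫ z, |φ z|) * (u - s) ^ (-(1 : ℝ) / 2) :=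
        norm_integral_le_of_norm_le
          (((integrableOn_sub_rpow_neg_half s t₁ t₂).mono_set
            (hS.trans inter_subset_right)).const_mul _)
          (ae_restrict_of_forall_mem hSm hpointwise)
    _ ≤ (4 * π * T) ^ (-(1 : ℝ) / 2) * (∫ z, |φ z|) * (2 * (t₂ - t₁) ^ ((1 : ℝ) / 2)) := by
        rw [integral_const_mul]
        gcongr
        exact setIntegral_sub_rpow_neg_half_le hS ht

lemma rpow_half_mul_rpow_neg_half_mul {c T : ℝ} (hc : 0 ≤ c) (hT : 0 < T) :
    T ^ ((1 : ℝ) / 2) * (c * T) ^ (-(1 : ℝ) / 2) = c ^ (-(1 : ℝ) / 2) := by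
  rw [mul_rpow hc hT.le, mul_left_comm, ← rpow_add hT]
  norm_num

theorem tightness_increment_bound_general (φ : SchwartzMap ℝ ℝ) :
    ∃ C > 0, ∀ T : ℝ, 1 ≤ T → ∀ y : ℝ, ∀ s ∈ Set.Icc (0 : ℝ) 1,
      ∀ t₁ t₂ : ℝ, 0 ≤ t₁ → t₁ ≤ t₂ → t₂ ≤ 1 →
        T ^ ((1 : ℝ) / 2) *
          ∫ u in Set.Ioc s 1 ∩ Set.Icc t₁ t₂,
            ∫ z : ℝ, (4 * π * (T * (u - s))) ^ (-(1 : ℝ) / 2) *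
              Real.exp (-(y - z) ^ 2 / (4 * (T * (u - s)))) * φ z ≤
          C * (t₂ - t₁) ^ ((1 : ℝ) / 2) := by
  refine ⟨2 * (4 * π) ^ (-(1 : ℝ) / 2) * (∫ z, |φ z|) + 1, by positivity, ?_⟩
  intro T hT y s _ t₁ t₂ _ ht _
  have hT0 : 0 < T := by linarith
  have hbound := abs_setIntegral_heatKernel_mul_le (S := Ioc s 1 ∩ Icc t₁ t₂) (s := s)
    φ.integrable hT0 y (measurableSet_Ioc.inter measurableSet_Icc)
    (inter_subset_inter_left _ Ioc_subset_Ioi_self) ht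
  calc T ^ ((1 : ℝ) / 2) * ∫ u in Ioc s 1 ∩ Icc t₁ t₂,
        ∫ z, heatKernel (T * (u - s)) (y - z) * φ z
      ≤ T ^ ((1 : ℝ) / 2) * ((4 * π * T) ^ (-(1 : ℝ) / 2) * (∫ z, |φ z|) *
          (2 * (t₂ - t₁) ^ ((1 : ℝ) / 2))) := by
        gcongr
        exact (le_abs_self _).trans hbound
    _ = 2 * (4 * π) ^ (-(1 : ℝ) / 2) * (∫ z, |φ z|) * (t₂ - t₁) ^ ((1 : ℝ) / 2) := by
        rw [← rpow_half_mul_rpow_neg_half_mul (by positivity : (0 : ℝ) ≤ 4 * π) hT0]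
        ring
    _ ≤ _ := by
        gcongr
        linarith

/-- The tightness estimate (3.39)–(3.40) in the case d = 1, α = 2:
`T^{1/2} ∫_{(s,1]} 1_{[t₁,t₂]}(u) (p_{T(u−s)} * φ)(y) du ≤ C (t₂ − t₁)^{1/2}`
uniformly in `T ≥ 1`, `y ∈ ℝ`, `s ∈ [0,1]` and `0 ≤ t₁ ≤ t₂ ≤ 1`. -/
theorem tightness_increment_bound (φ : SchwartzMap ℝ ℝ) (hφ : ∀ z, 0 ≤ φ z) :
    ∃ C > 0, ∀ T : ℝ, 1 ≤ T → ∀ y : ℝ, ∀ s ∈ Set.Icc (0 : ℝ) 1,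
      ∀ t₁ t₂ : ℝ, 0 ≤ t₁ → t₁ ≤ t₂ → t₂ ≤ 1 →
        T ^ ((1 : ℝ) / 2) *
          ∫ u in Set.Ioc s 1 ∩ Set.Icc t₁ t₂,
            ∫ z : ℝ, (4 * π * (T * (u - s))) ^ (-(1 : ℝ) / 2) *
              Real.exp (-(y - z) ^ 2 / (4 * (T * (u - s)))) * φ z ≤
          C * (t₂ - t₁) ^ ((1 : ℝ) / 2) :=
  tightness_increment_bound_general φ
end
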